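/- arXiv:2410.07581 — 9 statements merged into one kernel-verified Lean document; each statement's English description precedes it below -/
import Mathlib

section
/- Let G be a graph with a stable (independent) set T of order 3, and let e_1, e_2, e_3 be the three edges joining pairs of vertices of T. For S ⊆ {1,2,3}, let G_S be the graph with vertex set V(G) and edge set E(G) ∪ {e_j : j ∈ S}. Then X_{G_{12}} = X_{G_1} + X_{G_{23}} − X_{G_3} and X_{G_{123}} = X_{G_{13}} + X_{G_{23}} − X_{G_3}, where X_H denotes the chromatic symmetric function of H. -/
open scoped Classical
open MvPolynomial Finset

noncomputable section

/-- `σ⁺_I(a)`: the minimal partial sum of `I` that is at least `a`. -/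
def sigmaP (I : List ℕ) (a : ℝ) : ℝ :=
  sInf {x : ℝ | ∃ k ≤ I.length, x = ((I.take k).sum : ℝ) ∧ a ≤ x}

/-- `Θ⁺_I(a) = σ⁺_I(a) − a`. -/
def thetaP (I : List ℕ) (a : ℝ) : ℝ := sigmaP I a - a

/-- `σ⁻_I(a)`: the maximal partial sum of `I` that is at most `a`. -/
def sigmaM (I : List ℕ) (a : ℝ) : ℝ :=
  sSup {x : ℝ | ∃ k ≤ I.length, x = ((I.take k).sum : ℝ) ∧ x ≤ a}

/-- `Θ⁻_I(a) = a − σ⁻_I(a)`. -/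
def thetaM (I : List ℕ) (a : ℝ) : ℝ := a - sigmaM I a

/-- `w_I = i₁(i₂−1)⋯(i_z−1)`. -/
def wI : List ℕ → ℕ
  | [] => 1
  | i :: t => i * (t.map (· - 1)).prod

/-- `e_I`: the product of elementary symmetric polynomials indexed by the parts of `I`,
in `N` variables. -/
def eComp (N : ℕ) (I : List ℕ) : MvPolynomial (Fin N) ℝ :=
  (I.map fun i => MvPolynomial.esymm (Fin N) ℝ i).prod

/-- The chromatic symmetric function of a graph, truncated to `N` variables. -/
def csf {V : Type} [Fintype V] (G : SimpleGraph V) (N : ℕ) : MvPolynomial (Fin N) ℝ :=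
  ∑ κ : V → Fin N,
    if ∀ u v, G.Adj u v → κ u ≠ κ v then ∏ v, MvPolynomial.X (κ v) else 0

/-- Add a single edge `uv` to a graph. -/
def addE {V : Type} (G : SimpleGraph V) (u v : V) : SimpleGraph V :=
  G ⊔ SimpleGraph.fromRel fun x y => x = u ∧ y = v

/-- The list of consecutive pairs of a list of vertices. -/
def chainE (l : List ℕ) : List (ℕ × ℕ) := l.zip l.tail

/-- The simple graph on `Fin n` with the given list of edges. -/
def graphOfEdges (n : ℕ) (E : List (ℕ × ℕ)) : SimpleGraph (Fin n) :=
  SimpleGraph.fromRel fun u v => ((u : ℕ), (v : ℕ)) ∈ E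

/-- The path on `n` vertices. -/
def pathG (n : ℕ) : SimpleGraph (Fin n) := graphOfEdges n (chainE (List.range n))

/-- The cycle on `n` vertices. -/
def cycleG (n : ℕ) : SimpleGraph (Fin n) :=
  graphOfEdges n (chainE (List.range n ++ [0]))

/-- The tadpole `C_a^l`: a cycle on `a` vertices with a path of `l` edges attached. -/
def tadpoleG (a l : ℕ) : SimpleGraph (Fin (a + l)) :=
  graphOfEdges (a + l)
    (chainE (List.range a ++ [0]) ++ chainE (0 :: (List.range l).map (· + a)))

/-- The theta graph `θ_{abc}`: two vertices (`0` and `a+b+c-2`) joined by three internally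
disjoint paths of lengths `a`, `b`, `c`. -/
def thetaG (a b c : ℕ) : SimpleGraph (Fin (a + b + c - 1)) :=
  graphOfEdges (a + b + c - 1)
    (chainE (0 :: ((List.range (a - 1)).map (· + 1) ++ [a + b + c - 2])) ++
     chainE (0 :: ((List.range (b - 1)).map (· + a) ++ [a + b + c - 2])) ++
     chainE (0 :: ((List.range (c - 1)).map (· + (a + b - 1)) ++ [a + b + c - 2])))

/-- The index `p` defined by `m = i₁ + ⋯ + i_{p-1} + s` with `1 ≤ s ≤ i_p`:
the least `k` with `i₁ + ⋯ + i_k ≥ m`. -/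
def pIdx (I : List ℕ) (m : ℕ) : ℕ := sInf {k | m ≤ (I.take k).sum}

/-- The number `s` defined by `m = i₁ + ⋯ + i_{p-1} + s` with `1 ≤ s ≤ i_p`. -/
def sVal (I : List ℕ) (m : ℕ) : ℕ := m - (I.take (pIdx I m - 1)).sum

/-- The index `q` defined by `m = i₂ + ⋯ + i_q + t` with `1 ≤ t ≤ i_{q+1}`
(convention `i_{z+1} = i₁`). -/
def qIdx (I : List ℕ) (m : ℕ) : ℕ := sInf {k | m ≤ ((I.tail ++ I.take 1).take k).sum}

/-- The number `t` defined by `m = i₂ + ⋯ + i_q + t` with `1 ≤ t ≤ i_{q+1}`. -/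
def tVal (I : List ℕ) (m : ℕ) : ℕ := m - ((I.tail ++ I.take 1).take (qIdx I m - 1)).sum

/-- The part `i_p`. -/
def ipPart (I : List ℕ) (m : ℕ) : ℕ := I.getD (pIdx I m - 1) 0

/-- The second elementary symmetric polynomial evaluated on a list. -/
def e2 : List ℕ → ℤ
  | [] => 0
  | x :: t => (x : ℤ) * t.sum + e2 t

/-- The cycle-chord coefficient `Δ_I(m)`. -/
def DeltaI (I : List ℕ) (m : ℕ) : ℤ :=
  if (I.headI : ℤ) ≤ (ipPart I m : ℤ) - sVal I m then
    (sVal I m : ℤ) * ((ipPart I m : ℤ) - sVal I m - I.headI)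
  else
    e2 ((ipPart I m - sVal I m) ::
        ((I.drop (pIdx I m)).take (qIdx I m - pIdx I m) ++ [tVal I m]))

/-- The length of the prefix `P` in the decomposition `I = PQ`, where `Q` is the shortest
suffix of `I` with `|Q| ≥ a`. -/
def kPhi (a : ℕ) (I : List ℕ) : ℕ := sSup {j | j ≤ I.length ∧ a ≤ (I.drop j).sum}

/-- The transformation `φ`: writing `I = PQ` with `Q` the shortest suffix of modulus `≥ a`,
`φ(I) = I` if `Q = I`, and otherwise `φ(I) = i₁ · reverse(P∖i₁) · Q`. -/
def phi (a : ℕ) (I : List ℕ) : List ℕ :=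
  if kPhi a I = 0 then I
  else I.take 1 ++ ((I.drop 1).take (kPhi a I - 1)).reverse ++ I.drop (kPhi a I)

/-- The starting position of the longest suffix `R_I` of `I` of modulus `≤ a`. -/
def rIdx (a : ℕ) (I : List ℕ) : ℕ := sInf {j | (I.drop j).sum ≤ a}

/-- The partial reversal `ψ(I) = reverse(L_I) R_I`, where `R_I` is the longest suffix of `I`
of modulus `≤ a` and `L_I` is the complementary prefix. -/
def psi (a : ℕ) (I : List ℕ) : List ℕ :=
  (I.take (rIdx a I)).reverse ++ I.drop (rIdx a I)

/-- The clock coefficient `D_I = Θ⁺_I(2) − Θ⁻_{reverse(φ(I))}(a) + Δ_I(b+1)`. -/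
def DI (a b : ℕ) (I : List ℕ) : ℝ :=
  thetaP I 2 - thetaM (phi a I).reverse a + (DeltaI I (b + 1) : ℝ)

end

lemma ite_key1 {M α : Type} [Ring M] (x : M) (P : Prop) [Decidable P] [DecidableEq α] (a b c : α) :
    (if (P ∧ a ≠ b) ∧ a ≠ c then x else 0)
      = (if P ∧ a ≠ b then x else 0) + (if (P ∧ a ≠ c) ∧ b ≠ c then x else 0)
        - (if P ∧ b ≠ c then x else 0) := by
  by_cases hP : P <;> by_cases hA : a = b <;> by_cases hB : a = c <;> by_cases hC : b = c <;>
    simp_all <;> ring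

lemma ite_key2 {M α : Type} [Ring M] (x : M) (P : Prop) [Decidable P] [DecidableEq α] (a b c : α) :
    (if ((P ∧ a ≠ b) ∧ a ≠ c) ∧ b ≠ c then x else 0)
      = (if (P ∧ a ≠ b) ∧ b ≠ c then x else 0) + (if (P ∧ a ≠ c) ∧ b ≠ c then x else 0)
        - (if P ∧ b ≠ c then x else 0) := by
  by_cases hP : P <;> by_cases hA : a = b <;> by_cases hB : a = c <;> by_cases hC : b = c <;>
    simp_all <;> ring


lemma addE_adj' {V : Type} (G : SimpleGraph V) (a b x y : V) :
    (addE G a b).Adj x y ↔ G.Adj x y ∨ (x ≠ y ∧ ((x = a ∧ y = b) ∨ (y = a ∧ x = b))) := by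
  simp [addE, SimpleGraph.fromRel_adj, SimpleGraph.sup_adj]

lemma proper_addE {V : Type} (G : SimpleGraph V) (a b : V) (hab : a ≠ b) {N : ℕ}
    (κ : V → Fin N) :
    (∀ u v, (addE G a b).Adj u v → κ u ≠ κ v) ↔
      (∀ u v, G.Adj u v → κ u ≠ κ v) ∧ κ a ≠ κ b := by
  constructor
  · intro H
    refine ⟨fun u v h => H u v ((addE_adj' G a b u v).2 (Or.inl h)), ?_⟩
    exact H a b ((addE_adj' G a b a b).2 (Or.inr ⟨hab, Or.inl ⟨rfl, rfl⟩⟩))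
  · rintro ⟨h1, h2⟩ u v hadj
    rcases (addE_adj' G a b u v).1 hadj with h | ⟨-, ⟨rfl, rfl⟩ | ⟨rfl, rfl⟩⟩
    · exact h1 u v h
    · exact h2
    · exact fun h => h2 h.symm

/-- Triple deletion (Orellana–Scott): for a stable set `{v₁, v₂, v₃}` with
`e₁ = v₁v₂`, `e₂ = v₁v₃`, `e₃ = v₂v₃`,
`X_{G₁₂} = X_{G₁} + X_{G₂₃} − X_{G₃}` and `X_{G₁₂₃} = X_{G₁₃} + X_{G₂₃} − X_{G₃}`. -/
theorem stmt1 {V : Type} [Fintype V] (G : SimpleGraph V) (v1 v2 v3 : V)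
    (h12 : v1 ≠ v2) (h13 : v1 ≠ v3) (h23 : v2 ≠ v3)
    (a12 : ¬ G.Adj v1 v2) (a13 : ¬ G.Adj v1 v3) (a23 : ¬ G.Adj v2 v3) (N : ℕ) :
    csf (addE (addE G v1 v2) v1 v3) N
      = csf (addE G v1 v2) N + csf (addE (addE G v1 v3) v2 v3) N
        - csf (addE G v2 v3) N ∧
    csf (addE (addE (addE G v1 v2) v1 v3) v2 v3) N
      = csf (addE (addE G v1 v2) v2 v3) N + csf (addE (addE G v1 v3) v2 v3) N
        - csf (addE G v2 v3) N := by
  have E12 := proper_addE G v1 v2 h12 (N := N)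
  have E13 := proper_addE (addE G v1 v2) v1 v3 h13 (N := N)
  have E13s := proper_addE G v1 v3 h13 (N := N)
  have E23 := proper_addE (addE G v1 v3) v2 v3 h23 (N := N)
  have E23s := proper_addE G v2 v3 h23 (N := N)
  have E23d := proper_addE (addE G v1 v2) v2 v3 h23 (N := N)
  have E23t := proper_addE (addE (addE G v1 v2) v1 v3) v2 v3 h23 (N := N)
  constructor <;>
  { unfold csf
    rw [← Finset.sum_add_distrib, ← Finset.sum_sub_distrib]
    refine Finset.sum_congr rfl fun κ _ => ?_
    simp only [E12, E13, E13s, E23, E23s, E23d, E23t]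
    first
      | exact ite_key1 (M := MvPolynomial (Fin N) ℝ) (∏ v, MvPolynomial.X (κ v))
          (∀ u v, G.Adj u v → κ u ≠ κ v) (κ v1) (κ v2) (κ v3)
      | exact ite_key2 (M := MvPolynomial (Fin N) ℝ) (∏ v, MvPolynomial.X (κ v))
          (∀ u v, G.Adj u v → κ u ≠ κ v) (κ v1) (κ v2) (κ v3) }
end

section
/- The chromatic symmetric function of the path P_n on n vertices satisfies X_{P_n} = Σ_{I ⊨ n} w_I e_I, where for I = i_1 i_2 ⋯ i_z we set w_I = i_1 (i_2 − 1)(i_3 − 1) ⋯ (i_z − 1). -/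
open scoped Classical
open MvPolynomial Finset

/-!
Let `W_n` be the sum over proper colourings of the path on `n` vertices. Fixing the colour `c` of
the first vertex and applying inclusion–exclusion to the constraint on the second one gives
`W_{n+1} = ∑_{i+j=n} (-1)^i p_{i+1} W_j`, i.e. `W(z) (1 - z P(z)) = 1` with
`P(z) = ∑_k (-1)^k p_{k+1} z^k`. Newton's identities say `P(z) E(z) = E'(z)` for
`E(z) = ∑ e_k z^k`, so `E(z) (1 - z P(z)) = E - z E' = 1 - ∑_i (i-1) e_i z^i`. Splitting off the
first part of a composition shows that the inverse of the latter is `T(z) = ∑_I w'_I e_I z^{|I|}`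
with `w'_I = (i₁-1)⋯(i_z-1)`, hence `W = E T`. Finally `z E' T = E T - 1 = W - 1`, and the
coefficient of `z^{n+1}` in `z E' T` is `∑_{I ⊨ n+1} w_I e_I`, again by splitting off the first part.
-/

noncomputable section

lemma Fintype.sum_fin_succ_pi {σ M : Type*} [Fintype σ] [AddCommMonoid M] {n : ℕ}
    (f : (Fin (n + 1) → σ) → M) :
    ∑ κ, f κ = ∑ c, ∑ κ : Fin n → σ, f (Fin.cons c κ) := by
  rw [← (Fin.consEquiv fun _ => σ).sum_comp, Fintype.sum_prod_type]
  rfl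

section PathColorings

variable (σ R : Type*) [CommRing R]

def properMonomial (l : List σ) : MvPolynomial σ R :=
  if l.IsChain (· ≠ ·) then (l.map X).prod else 0

variable {σ R} in
lemma properMonomial_cons_cons (c d : σ) (l : List σ) :
    properMonomial σ R (c :: d :: l) = if c = d then 0 else X c * properMonomial σ R (d :: l) := by
  by_cases h : c = d <;> simp [properMonomial, h]

variable [Fintype σ]

def pathColoringSum (n : ℕ) : MvPolynomial σ R :=
  ∑ κ : Fin n → σ, properMonomial σ R (List.ofFn κ)

/-- Sum over the proper colourings of the path on `n + 1` vertices whose first vertex has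
colour `c`. -/
def pathColoringSumFrom (n : ℕ) (c : σ) : MvPolynomial σ R :=
  ∑ κ : Fin n → σ, properMonomial σ R (c :: List.ofFn κ)

lemma pathColoringSum_zero : pathColoringSum σ R 0 = 1 := by
  simp [pathColoringSum, properMonomial]

lemma pathColoringSum_succ_eq_sum_pathColoringSumFrom (n : ℕ) :
    pathColoringSum σ R (n + 1) = ∑ c, pathColoringSumFrom σ R n c := by
  simp only [pathColoringSum, Fintype.sum_fin_succ_pi, List.ofFn_cons, pathColoringSumFrom]

variable {σ R}

lemma pathColoringSumFrom_zero (c : σ) : pathColoringSumFrom σ R 0 c = X c := by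
  simp [pathColoringSumFrom, properMonomial]

lemma pathColoringSumFrom_succ (n : ℕ) (c : σ) :
    pathColoringSumFrom σ R (n + 1) c
      = X c * (pathColoringSum σ R (n + 1) - pathColoringSumFrom σ R n c) := by
  simp only [pathColoringSumFrom, Fintype.sum_fin_succ_pi, List.ofFn_cons, properMonomial_cons_cons,
    pathColoringSum_succ_eq_sum_pathColoringSumFrom]
  have drop_diagonal (d : σ) (κ : Fin n → σ) :
      (if c = d then 0 else X c * properMonomial σ R (d :: List.ofFn κ))
        = X c * properMonomial σ R (d :: List.ofFn κ)
          - if c = d then X c * properMonomial σ R (d :: List.ofFn κ) else 0 := by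
    split_ifs <;> simp
  simp only [drop_diagonal, Finset.sum_sub_distrib, Finset.sum_ite_irrel, Finset.sum_const_zero,
    Finset.sum_ite_eq, Finset.mem_univ, if_true, mul_sub, Finset.mul_sum]

lemma pathColoringSumFrom_eq_sum_antidiagonal (n : ℕ) (c : σ) :
    pathColoringSumFrom σ R n c
      = ∑ p ∈ antidiagonal n, (-1) ^ p.1 * X c ^ (p.1 + 1) * pathColoringSum σ R p.2 := by
  induction n with
  | zero => simp [pathColoringSumFrom_zero, pathColoringSum_zero]
  | succ n ih =>
    rw [pathColoringSumFrom_succ, ih, Finset.Nat.sum_antidiagonal_succ, mul_sub, Finset.mul_sum,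
      sub_eq_add_neg, ← Finset.sum_neg_distrib]
    exact congrArg₂ (· + ·) (by ring) (Finset.sum_congr rfl fun p _ => by ring)

lemma pathColoringSum_succ_eq_sum_psum (n : ℕ) :
    pathColoringSum σ R (n + 1)
      = ∑ p ∈ antidiagonal n, (-1) ^ p.1 * psum σ R (p.1 + 1) * pathColoringSum σ R p.2 := by
  simp only [pathColoringSum_succ_eq_sum_pathColoringSumFrom,
    pathColoringSumFrom_eq_sum_antidiagonal, psum]
  rw [Finset.sum_comm]
  simp only [Finset.mul_sum, Finset.sum_mul]

end PathColorings

lemma mem_chainE_range {n a b : ℕ} : (a, b) ∈ chainE (List.range n) ↔ b = a + 1 ∧ b < n := by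
  simp only [chainE, List.tail_range, List.mem_iff_getElem, List.getElem_zip, List.getElem_range,
    List.getElem_range', one_mul, Prod.mk.injEq, List.length_zip, List.length_range,
    List.length_range', tsub_le_iff_right, le_add_iff_nonneg_right, zero_le, inf_of_le_right,
    exists_and_left, exists_prop, exists_eq_left]
  omega

lemma pathG_adj {n : ℕ} (u v : Fin n) :
    (pathG n).Adj u v ↔ (v : ℕ) = u + 1 ∨ (u : ℕ) = v + 1 := by
  simp only [pathG, graphOfEdges, SimpleGraph.fromRel_adj, mem_chainE_range, ne_eq, Fin.ext_iff]
  omega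

lemma pathG_adj_ne_iff_isChain {α : Type*} {n : ℕ} (κ : Fin n → α) :
    (∀ u v, (pathG n).Adj u v → κ u ≠ κ v) ↔ (List.ofFn κ).IsChain (· ≠ ·) := by
  rw [List.isChain_ofFn]
  refine ⟨fun h i hi => h _ _ ((pathG_adj _ _).2 (Or.inl rfl)), fun h u v huv => ?_⟩
  obtain ⟨u, hu⟩ := u
  obtain ⟨v, hv⟩ := v
  rcases (pathG_adj _ _).1 huv with rfl | rfl
  · exact h u hv
  · exact (h v hu).symm

lemma csf_pathG (n N : ℕ) : csf (pathG n) N = pathColoringSum (Fin N) ℝ n := by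
  refine Finset.sum_congr (by congr!) fun κ _ => ?_
  simp only [properMonomial, List.map_ofFn, List.prod_ofFn, pathG_adj_ne_iff_isChain,
    Function.comp_apply]

lemma sum_antidiagonal_neg_one_pow_psum_mul_esymm (σ R : Type*) [Fintype σ] [CommRing R] (n : ℕ) :
    ∑ p ∈ antidiagonal n, (-1) ^ p.1 * psum σ R (p.1 + 1) * esymm σ R p.2
      = (n + 1) * esymm σ R (n + 1) := by
  have newton := mul_esymm_eq_sum σ R (n + 1)
  rw [Finset.sum_filter, Finset.Nat.sum_antidiagonal_succ', if_neg (lt_irrefl _), zero_add]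
    at newton
  push_cast at newton
  rw [← Finset.Nat.sum_antidiagonal_swap, newton, Finset.mul_sum]
  refine Finset.sum_congr rfl fun ⟨i, j⟩ hij => ?_
  rw [Finset.HasAntidiagonal.mem_antidiagonal] at hij
  subst hij
  have hsq : ((-1 : MvPolynomial σ R) ^ i) ^ 2 = 1 := by
    rw [← pow_mul, pow_mul', neg_one_sq, one_pow]
  simp only [Prod.swap]
  rw [if_pos (by omega)]
  linear_combination (-(-1) ^ j * psum σ R (j + 1) * esymm σ R i) * hsq

namespace Composition

def consAntidiagonal (n : ℕ) (x : Σ p : antidiagonal n, Composition p.1.2) :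
    Composition (n + 1) where
  blocks := (x.1.1.1 + 1) :: x.2.blocks
  blocks_pos := by
    rintro i (_ | ⟨_, hi⟩)
    exacts [Nat.succ_pos _, x.2.blocks_pos hi]
  blocks_sum := by
    have := Finset.HasAntidiagonal.mem_antidiagonal.1 x.1.2
    simp only [List.sum_cons, x.2.blocks_sum]
    omega

lemma consAntidiagonal_bijective (n : ℕ) : Function.Bijective (consAntidiagonal n) := by
  constructor
  · rintro ⟨⟨⟨i, j⟩, hij⟩, J⟩ ⟨⟨⟨i', j'⟩, hij'⟩, J'⟩ h
    obtain ⟨rfl, hJ⟩ : i = i' ∧ J.blocks = J'.blocks := by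
      simpa [consAntidiagonal] using congrArg blocks h
    obtain rfl : j = j' := by
      rw [Finset.HasAntidiagonal.mem_antidiagonal] at hij hij'
      omega
    rw [Composition.ext hJ]
  · rintro ⟨_ | ⟨a, t⟩, hpos, hsum⟩
    · simp at hsum
    have ha : 0 < a := hpos List.mem_cons_self
    rw [List.sum_cons] at hsum
    refine ⟨⟨⟨(a - 1, n + 1 - a), ?_⟩, ⟨t, fun hi => hpos (List.mem_cons_of_mem a hi), ?_⟩⟩, ?_⟩
    · rw [Finset.HasAntidiagonal.mem_antidiagonal]
      omega
    · dsimp only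
      omega
    · exact Composition.ext (by simp only [consAntidiagonal, List.cons.injEq, and_true]; omega)

lemma sum_zero {M : Type*} [AddCommMonoid M] (f : List ℕ → M) :
    ∑ I : Composition 0, f I.blocks = f [] := by
  simp [fun I : Composition 0 => I.blocks_eq_nil.2 rfl, composition_card]

lemma sum_succ {M : Type*} [AddCommMonoid M] (n : ℕ) (f : List ℕ → M) :
    ∑ I : Composition (n + 1), f I.blocks
      = ∑ p ∈ antidiagonal n, ∑ J : Composition p.2, f ((p.1 + 1) :: J.blocks) := by
  rw [← Fintype.sum_bijective _ (consAntidiagonal_bijective n) _ _ fun _ => rfl,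
    Fintype.sum_sigma, ← Finset.sum_coe_sort (antidiagonal n)]
  rfl

end Composition

section CompositionSums

variable (N : ℕ)

/-- `w'_I = (i₁-1)(i₂-1)⋯(i_z-1)`, so that `wI (i :: l) = i * wTail l`. -/
def wTail (l : List ℕ) : ℕ := (l.map (· - 1)).prod

def tailWeightedSum (n : ℕ) : MvPolynomial (Fin N) ℝ :=
  ∑ I : Composition n, C (wTail I.blocks : ℝ) * eComp N I.blocks

lemma eComp_cons (i : ℕ) (l : List ℕ) : eComp N (i :: l) = esymm (Fin N) ℝ i * eComp N l := rfl

lemma tailWeightedSum_zero : tailWeightedSum N 0 = 1 := by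
  rw [tailWeightedSum, Composition.sum_zero fun l => C (wTail l : ℝ) * eComp N l]
  simp [wTail, eComp]

lemma tailWeightedSum_succ (n : ℕ) :
    tailWeightedSum N (n + 1)
      = ∑ p ∈ antidiagonal n, (p.1 : MvPolynomial (Fin N) ℝ) * esymm (Fin N) ℝ (p.1 + 1)
          * tailWeightedSum N p.2 := by
  rw [tailWeightedSum, Composition.sum_succ n fun l => C (wTail l : ℝ) * eComp N l]
  refine Finset.sum_congr rfl fun p _ => ?_
  simp only [tailWeightedSum, Finset.mul_sum, wTail, eComp_cons, List.map_cons, List.prod_cons]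
  refine Finset.sum_congr rfl fun J _ => ?_
  simp only [Nat.add_sub_cancel, Nat.cast_mul, map_mul, map_natCast]
  ring

lemma sum_wI_succ (n : ℕ) :
    ∑ I : Composition (n + 1), C (wI I.blocks : ℝ) * eComp N I.blocks
      = ∑ p ∈ antidiagonal n,
          ((p.1 + 1 : ℕ) : MvPolynomial (Fin N) ℝ) * esymm (Fin N) ℝ (p.1 + 1)
            * tailWeightedSum N p.2 := by
  rw [Composition.sum_succ n fun l => C (wI l : ℝ) * eComp N l]
  refine Finset.sum_congr rfl fun p _ => ?_
  simp only [tailWeightedSum, Finset.mul_sum, wI, eComp_cons]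
  refine Finset.sum_congr rfl fun J _ => ?_
  simp only [wTail, Nat.cast_mul, map_mul, map_natCast]
  ring

end CompositionSums

lemma PowerSeries.mk_eq_one_add_X_mul {A : Type*} [Semiring A] {f : ℕ → A} {g : PowerSeries A}
    (h0 : f 0 = 1) (hsucc : ∀ n, f (n + 1) = PowerSeries.coeff n g) :
    PowerSeries.mk f = 1 + PowerSeries.X * g := by
  ext (_ | n)
  · simp [h0]
  · simp [hsucc, PowerSeries.coeff_one]

open PowerSeries in
lemma pathColoringSum_succ_eq_sum_esymm_mul_tailWeightedSum (N n : ℕ) :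
    pathColoringSum (Fin N) ℝ (n + 1)
      = ∑ p ∈ antidiagonal n,
          ((p.1 + 1 : ℕ) : MvPolynomial (Fin N) ℝ) * esymm (Fin N) ℝ (p.1 + 1)
            * tailWeightedSum N p.2 := by
  set W := mk (pathColoringSum (Fin N) ℝ)
  set P := mk fun k => (-1) ^ k * psum (Fin N) ℝ (k + 1)
  set E := mk (esymm (Fin N) ℝ)
  set D := mk fun k => ((k + 1 : ℕ) : MvPolynomial (Fin N) ℝ) * esymm (Fin N) ℝ (k + 1)
  set K := mk fun k => (k : MvPolynomial (Fin N) ℝ) * esymm (Fin N) ℝ (k + 1)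
  set T := mk (tailWeightedSum N)
  have hW : W = 1 + PowerSeries.X * (P * W) :=
    mk_eq_one_add_X_mul (pathColoringSum_zero _ _) fun n => by
      simp only [pathColoringSum_succ_eq_sum_psum, PowerSeries.coeff_mul, coeff_mk, P, W]
  have hPE : P * E = D := by
    refine PowerSeries.ext fun n => ?_
    simp only [PowerSeries.coeff_mul, coeff_mk, P, E, D]
    rw [sum_antidiagonal_neg_one_pow_psum_mul_esymm]
    push_cast
    ring
  have hE : E = 1 + PowerSeries.X * (D - K) :=
    mk_eq_one_add_X_mul (esymm_zero _ _) fun n => by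
      simp only [D, K, map_sub, coeff_mk]
      push_cast
      ring
  have hT : T = 1 + PowerSeries.X * (K * T) :=
    mk_eq_one_add_X_mul (tailWeightedSum_zero N) fun n => by
      simp only [tailWeightedSum_succ, PowerSeries.coeff_mul, coeff_mk, K, T]
  have hWET : W = E * T := by
    linear_combination (E * T) * hW - W * hT - W * T * hE + W * PowerSeries.X * T * hPE
  have hXDT : PowerSeries.X * (D * T) = W - 1 := by
    linear_combination (-1) * hWET - hT - T * hE
  have := congrArg (PowerSeries.coeff (n + 1)) hXDT.symm
  rw [map_sub, PowerSeries.coeff_succ_X_mul, PowerSeries.coeff_one, if_neg n.succ_ne_zero,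
    sub_zero, PowerSeries.coeff_mul] at this
  simpa only [W, D, T, coeff_mk] using this

end

theorem stmt2_general (n : ℕ) (N : ℕ) :
    csf (pathG n) N
      = ∑ I : Composition n, MvPolynomial.C (wI I.blocks : ℝ) * eComp N I.blocks := by
  rw [csf_pathG]
  cases n with
  | zero =>
    rw [pathColoringSum_zero, Composition.sum_zero fun l => C (wI l : ℝ) * eComp N l]
    simp [wI, eComp]
  | succ n =>
    rw [sum_wI_succ, pathColoringSum_succ_eq_sum_esymm_mul_tailWeightedSum]

/-- `X_{P_n} = Σ_{I ⊨ n} w_I e_I`. -/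
theorem stmt2 (n : ℕ) (hn : 1 ≤ n) (N : ℕ) :
    csf (pathG n) N
      = ∑ I : Composition n, MvPolynomial.C (wI I.blocks : ℝ) * eComp N I.blocks :=
  stmt2_general n N
end

section
/- Let I = i_1⋯i_z be a composition of n = a + b + 1 (a ≥ b ≥ 1), and define p, s by b+1 = i_1+⋯+i_{p−1}+s with 1 ≤ p ≤ z, 1 ≤ s ≤ i_p. Then i_p − s = Θ⁻_{Ī}(a), where Ī is the reversal of I. -/
open scoped Classical
open MvPolynomial Finset

/-- `i_p − s = Θ⁻_{Ī}(a)`, where `p, s` are defined by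
`b+1 = i₁ + ⋯ + i_{p−1} + s` with `1 ≤ s ≤ i_p`. -/
theorem stmt6 (a b n : ℕ) (hb : 1 ≤ b) (hba : b ≤ a) (hn : n = a + b + 1)
    (I : Composition n) :
    (ipPart I.blocks (b + 1) : ℝ) - (sVal I.blocks (b + 1) : ℝ)
      = thetaM I.blocks.reverse a := by
  classical
  set J := I.blocks with hJ
  have hsum : J.sum = n := I.blocks_sum
  set z := J.length with hz
  have hpdef : pIdx J (b + 1) = sInf {k | b + 1 ≤ (J.take k).sum} := rfl
  set p := pIdx J (b + 1) with hp
  -- basic facts about p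
  have hzmem : z ∈ {k | b + 1 ≤ (J.take k).sum} := by
    simp only [Set.mem_setOf_eq, hz, List.take_length, hsum]; omega
  have hpz : p ≤ z := by rw [hpdef]; exact Nat.sInf_le hzmem
  have hpmem : b + 1 ≤ (J.take p).sum := by
    have h := Nat.sInf_mem (⟨z, hzmem⟩ : {k | b + 1 ≤ (J.take k).sum}.Nonempty)
    rw [← hpdef] at h
    exact h
  have hp0 : 1 ≤ p := by
    rcases Nat.eq_zero_or_pos p with h | h
    · rw [h] at hpmem; simp at hpmem
    · exact h
  have hp1 : (J.take (p - 1)).sum < b + 1 := by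
    by_contra h
    push_neg at h
    have := Nat.sInf_le (show p - 1 ∈ {k | b + 1 ≤ (J.take k).sum} from h)
    omega
  have hz0 : 1 ≤ z := le_trans hp0 hpz
  have hplt : p - 1 < z := by omega
  -- the p-th part
  have hip : ipPart J (b + 1) = J.get ⟨p - 1, hplt⟩ := by
    rw [ipPart, ← hp, List.getD_eq_getElem _ _ hplt]; rfl
  have hsp : (J.take p).sum = (J.take (p - 1)).sum + J.get ⟨p - 1, hplt⟩ := by
    have := List.sum_take_succ J (p - 1) hplt
    rw [show p - 1 + 1 = p by omega] at this
    rw [this]; rfl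
  have hsval : sVal J (b + 1) = b + 1 - (J.take (p - 1)).sum := rfl
  -- sums of prefixes are monotone
  have hmono : ∀ k k' : ℕ, k ≤ k' → (J.take k).sum ≤ (J.take k').sum := by
    intro k k' hkk
    have h1 : (J.take k').take k = J.take k := by
      rw [List.take_take, min_eq_left hkk]
    calc (J.take k).sum = ((J.take k').take k).sum := by rw [h1]
      _ ≤ ((J.take k').take k).sum + ((J.take k').drop k).sum := Nat.le_add_right _ _
      _ = (J.take k').sum := List.sum_take_add_sum_drop _ _
  have htake : ∀ k : ℕ, (J.take k).sum ≤ n := by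
    intro k
    rw [← hsum]
    rcases le_or_gt k z with h | h
    · calc (J.take k).sum ≤ (J.take z).sum := hmono _ _ h
        _ = J.sum := by rw [hz, List.take_length]
    · rw [List.take_of_length_le (by omega)]
  -- reverse prefix sums
  have hrev : ∀ k, k ≤ z → (J.reverse.take k).sum = n - (J.take (z - k)).sum := by
    intro k hk
    have h1 : (J.reverse.take k).sum + (J.reverse.drop k).sum = n := by
      rw [List.sum_take_add_sum_drop, List.sum_reverse, hsum]
    have h2 : J.reverse.drop k = (J.take (z - k)).reverse := by
      rw [List.reverse_take, hz]
      congr 1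
      omega
    rw [h2, List.sum_reverse] at h1
    omega
  -- compute sigmaM
  have hsig : sigmaM J.reverse a = ((n - (J.take p).sum : ℕ) : ℝ) := by
    rw [sigmaM]
    apply le_antisymm
    · apply csSup_le
      · refine ⟨((n - (J.take p).sum : ℕ) : ℝ), z - p, by simp [hz], ?_, ?_⟩
        · rw [hrev (z - p) (by omega), show z - (z - p) = p by omega]
        · exact_mod_cast (show n - (J.take p).sum ≤ a by have := htake p; omega)
      · rintro x ⟨k, hk, hx, hxa⟩
        rw [List.length_reverse, ← hz] at hk
        rw [hrev k hk] at hx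
        rw [hx] at hxa ⊢
        have hxa' : n - (J.take (z - k)).sum ≤ a := by exact_mod_cast hxa
        have hbig : b + 1 ≤ (J.take (z - k)).sum := by
          have := htake (z - k); omega
        have hple : p ≤ z - k := by rw [hpdef]; exact Nat.sInf_le hbig
        have := hmono _ _ hple
        exact_mod_cast (show n - (J.take (z - k)).sum ≤ n - (J.take p).sum by omega)
    · apply le_csSup
      · exact ⟨a, by rintro x ⟨k, hk, hx, hxa⟩; exact hxa⟩
      · refine ⟨z - p, by simp [hz], ?_, ?_⟩
        · rw [hrev (z - p) (by omega), show z - (z - p) = p by omega]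
        · exact_mod_cast (show n - (J.take p).sum ≤ a by have := htake p; omega)
  -- finish
  rw [thetaM, hsig, hip, hsval]
  rw [Nat.cast_sub (by omega : (J.take (p-1)).sum ≤ b + 1),
      Nat.cast_sub (htake p)]
  have hspR : ((J.take p).sum : ℝ) = ((J.take (p-1)).sum : ℝ) + (J.get ⟨p - 1, hplt⟩ : ℝ) := by
    exact_mod_cast hsp
  have hnR : (n : ℝ) = (a : ℝ) + (b : ℝ) + 1 := by exact_mod_cast hn
  have hb1 : ((b + 1 : ℕ) : ℝ) = (b : ℝ) + 1 := by push_cast; ring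
  rw [hb1, hnR]
  linarith [hspR]
end

section
/- Let a ≥ b ≥ c ≥ 1 and n = a+b+c−1. Define the involution φ on compositions of n: writing I = PQ where Q is the shortest suffix of I with |Q| ≥ a, set φ(I) = I if Q = I, and φ(I) = i_1 · (reversal of P∖i_1) · Q otherwise, where P∖i_1 removes the first part of P. Then φ is an involution on compositions of n, and w_{φ(I)} e_{φ(I)} = w_I e_I for all I. -/
open scoped Classical
open MvPolynomial Finset

lemma kPhi_bdd (a : ℕ) (L : List ℕ) : BddAbove {j | j ≤ L.length ∧ a ≤ (L.drop j).sum} :=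
  ⟨L.length, fun _ hj => hj.1⟩

lemma kPhi_le (a : ℕ) (L : List ℕ) : kPhi a L ≤ L.length := by
  rcases Set.eq_empty_or_nonempty {j | j ≤ L.length ∧ a ≤ (L.drop j).sum} with h | h
  · simp [kPhi, h]
  · exact (Nat.sSup_mem h (kPhi_bdd a L)).1

lemma kPhi_mem (a : ℕ) (L : List ℕ) (hk : kPhi a L ≠ 0) :
    kPhi a L ≤ L.length ∧ a ≤ (L.drop (kPhi a L)).sum := by
  rcases Set.eq_empty_or_nonempty {j | j ≤ L.length ∧ a ≤ (L.drop j).sum} with h | h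
  · exact absurd (by simp [kPhi, h]) hk
  · exact Nat.sSup_mem h (kPhi_bdd a L)

lemma list_decomp (L : List ℕ) (k : ℕ) (hk : k ≠ 0) :
    L = L.take 1 ++ ((L.drop 1).take (k - 1) ++ L.drop k) := by
  have h1 : L.take k = L.take 1 ++ (L.drop 1).take (k - 1) := by
    conv_lhs => rw [show k = 1 + (k - 1) by omega, List.take_add]
  conv_lhs => rw [← List.take_append_drop k L, h1, List.append_assoc]

lemma phi_eq (a : ℕ) (L : List ℕ) (hk : kPhi a L ≠ 0) :
    phi a L = L.take 1 ++ (((L.drop 1).take (kPhi a L - 1)).reverse ++ L.drop (kPhi a L)) := by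
  rw [phi, if_neg hk, List.append_assoc]

lemma phi_perm (a : ℕ) (L : List ℕ) : (phi a L).Perm L := by
  by_cases hk : kPhi a L = 0
  · rw [phi, if_pos hk]
  · rw [phi_eq a L hk]
    conv_rhs => rw [list_decomp L (kPhi a L) hk]
    exact ((List.reverse_perm _).append_right _).append_left _

lemma sum_drop_le (L : List ℕ) {i j : ℕ} (hij : i ≤ j) :
    (L.drop j).sum ≤ (L.drop i).sum := by
  rw [show j = i + (j - i) by omega, ← List.drop_drop]
  rw [← List.sum_take_add_sum_drop (L.drop i) (j - i)]
  omega

lemma phi_drop (a : ℕ) (L : List ℕ) (hk : kPhi a L ≠ 0) :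
    (phi a L).drop (kPhi a L) = L.drop (kPhi a L) := by
  have hle := (kPhi_mem a L hk).1
  have h1 : (L.take 1 ++ ((L.drop 1).take (kPhi a L - 1)).reverse).length = kPhi a L := by
    simp [List.length_take]
    omega
  rw [phi, if_neg hk, List.drop_left' h1]

lemma kPhi_phi (a : ℕ) (L : List ℕ) : kPhi a (phi a L) = kPhi a L := by
  by_cases hk : kPhi a L = 0
  · rw [phi, if_pos hk, hk]
  · have hmem := kPhi_mem a L hk
    have hlen : (phi a L).length = L.length := (phi_perm a L).length_eq
    apply le_antisymm
    · apply csSup_le ⟨kPhi a L, by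
        simp only [Set.mem_setOf_eq, hlen, phi_drop a L hk]; exact hmem⟩
      rintro x ⟨hx1, hx2⟩
      have hxS : x ∈ {j | j ≤ L.length ∧ a ≤ (L.drop j).sum} := by
        rcases le_or_gt x (kPhi a L) with h | h
        · exact ⟨le_trans h hmem.1, le_trans hmem.2 (sum_drop_le L h)⟩
        · refine ⟨by omega, ?_⟩
          have : (phi a L).drop x = L.drop x :=
            calc (phi a L).drop x
                = ((phi a L).drop (kPhi a L)).drop (x - kPhi a L) := by
                  rw [List.drop_drop]; congr 1; omega
              _ = (L.drop (kPhi a L)).drop (x - kPhi a L) := by rw [phi_drop a L hk]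
              _ = L.drop x := by rw [List.drop_drop]; congr 1; omega
          rwa [this] at hx2
      exact le_csSup (kPhi_bdd a L) hxS
    · exact le_csSup (kPhi_bdd a (phi a L))
        ⟨by rw [hlen]; exact hmem.1, by rw [phi_drop a L hk]; exact hmem.2⟩

lemma phi_phi (a : ℕ) (L : List ℕ) : phi a (phi a L) = L := by
  by_cases hk : kPhi a L = 0
  · have h0 : phi a L = L := by rw [phi, if_pos hk]
    rw [h0]; exact h0
  · have hle := (kPhi_mem a L hk).1
    have hL1 : (L.take 1).length = 1 := by simp [List.length_take]; omega
    have hM : (((L.drop 1).take (kPhi a L - 1)).reverse).length = kPhi a L - 1 := by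
      simp [List.length_take]; omega
    have hk' : kPhi a (phi a L) = kPhi a L := kPhi_phi a L
    have hphi : phi a L = L.take 1 ++ (((L.drop 1).take (kPhi a L - 1)).reverse
        ++ L.drop (kPhi a L)) := phi_eq a L hk
    rw [phi, hk', if_neg hk]
    have ht1 : (phi a L).take 1 = L.take 1 := by
      rw [hphi, List.take_left' hL1]
    have hd1 : (phi a L).drop 1 = ((L.drop 1).take (kPhi a L - 1)).reverse
        ++ L.drop (kPhi a L) := by
      rw [hphi, List.drop_left' hL1]
    rw [ht1, hd1, List.take_left' hM, List.reverse_reverse, phi_drop a L hk]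
    rw [List.append_assoc]
    exact (list_decomp L (kPhi a L) hk).symm

lemma phi_tail_perm (a x : ℕ) (t : List ℕ) (hk : kPhi a (x :: t) ≠ 0) :
    phi a (x :: t) = x :: ((t.take (kPhi a (x :: t) - 1)).reverse
      ++ t.drop (kPhi a (x :: t) - 1)) := by
  rw [phi_eq a _ hk]
  have h1 : (x :: t).drop (kPhi a (x :: t)) = t.drop (kPhi a (x :: t) - 1) := by
    conv_lhs => rw [show kPhi a (x :: t) = (kPhi a (x :: t) - 1) + 1 by omega, List.drop_succ_cons]
  simp [h1]

lemma wI_phi (a : ℕ) (L : List ℕ) : wI (phi a L) = wI L := by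
  by_cases hk : kPhi a L = 0
  · rw [phi, if_pos hk]
  · have hle := (kPhi_mem a L hk).1
    obtain ⟨x, t, rfl⟩ : ∃ x t, L = x :: t := by
      cases L with
      | nil => simp at hle; omega
      | cons x t => exact ⟨x, t, rfl⟩
    rw [phi_tail_perm a x t hk]
    have hperm : ((t.take (kPhi a (x :: t) - 1)).reverse
        ++ t.drop (kPhi a (x :: t) - 1)).Perm t := by
      conv_rhs => rw [← List.take_append_drop (kPhi a (x :: t) - 1) t]
      exact (List.reverse_perm _).append_right _
    show x * _ = x * _
    rw [(hperm.map (· - 1)).prod_eq]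

lemma eComp_phi (a N : ℕ) (L : List ℕ) : eComp N (phi a L) = eComp N L :=
  ((phi_perm a L).map _).prod_eq

/-- `φ` maps compositions of `n` to compositions of `n`, is an involution, and
preserves `w_I e_I`. -/
theorem stmt8 (a b c n : ℕ) (hc : 1 ≤ c) (hcb : c ≤ b) (hba : b ≤ a)
    (hn : n = a + b + c - 1) (I : Composition n) :
    (phi a I.blocks).sum = n ∧ (∀ i ∈ phi a I.blocks, 0 < i) ∧
    phi a (phi a I.blocks) = I.blocks ∧
    ∀ N, MvPolynomial.C (wI (phi a I.blocks) : ℝ) * eComp N (phi a I.blocks)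
        = MvPolynomial.C (wI I.blocks : ℝ) * eComp N I.blocks := by
  refine ⟨?_, ?_, phi_phi a I.blocks, ?_⟩
  · rw [(phi_perm a I.blocks).sum_eq, I.blocks_sum]
  · exact fun i hi => I.blocks_pos ((phi_perm a I.blocks).mem_iff.mp hi)
  · intro N
    rw [wI_phi, eComp_phi]
end

section
/- Let a ≥ b ≥ 2, n = a+b+1, and let I = i_1⋯i_z be a composition of n with w_I > 0 and i_1 = 1. Then D_I ≥ 0, where D_I = Θ⁺_I(2) − Θ⁻_{\overline{φ(I)}}(a) + Δ_I(b+1). -/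
open scoped Classical
open MvPolynomial Finset

/-!
The map `φ` only permutes parts lying before the shortest suffix of modulus `≥ a`, so it does
not change the suffix sums of `I` that are `≤ a`; reading the partial sums of the reversed
composition as complements of partial sums of `I` then gives
`Θ⁻_{reverse φ(I)}(a) = Θ⁺_I(n - a) = Θ⁺_I(b+1) = i_p - s`.
In both cases of its definition `Δ_I(b+1) ≥ i_p - s - i₁`, while `Θ⁺_I(2) = i₂ - 1` when
`i₁ = 1`. Hence `D_I ≥ i₂ - 2 ≥ 0`, since `w_I > 0` forces `i₂ ≥ 2`.
-/

lemma List.sum_take_le_sum_take (L : List ℕ) {j k : ℕ} (h : j ≤ k) :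
    (L.take j).sum ≤ (L.take k).sum :=
  (List.take_sublist_take_left h).sum_le_sum fun _ _ => Nat.zero_le _

lemma List.sum_drop_le_sum_drop (L : List ℕ) {j k : ℕ} (h : j ≤ k) :
    (L.drop k).sum ≤ (L.drop j).sum :=
  (L.drop_sublist_drop_left h).sum_le_sum fun _ _ => Nat.zero_le _

lemma List.sum_take_reverse (L : List ℕ) (k : ℕ) :
    (L.reverse.take k).sum = (L.drop (L.length - k)).sum := by
  rw [List.take_reverse, List.sum_reverse]

lemma List.cast_sum_drop (L : List ℕ) (j : ℕ) :
    ((L.drop j).sum : ℝ) = L.sum - (L.take j).sum := by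
  rw [← L.sum_take_add_sum_drop j]
  push_cast
  ring

lemma sigmaP_eq {L : List ℕ} {m : ℝ} {k : ℕ} (hk : k ≤ L.length) (hm : m ≤ (L.take k).sum)
    (hmin : ∀ j, m ≤ (L.take j).sum → (L.take k).sum ≤ (L.take j).sum) :
    sigmaP L m = (L.take k).sum := by
  refine IsLeast.csInf_eq ⟨⟨k, hk, rfl, hm⟩, ?_⟩
  rintro _ ⟨j, -, rfl, hj⟩
  exact_mod_cast hmin j hj

lemma isLeast_sigmaP (L : List ℕ) {m : ℝ} (hm : m ≤ L.sum) :
    IsLeast {x : ℝ | ∃ k ≤ L.length, x = ((L.take k).sum : ℝ) ∧ m ≤ x} (sigmaP L m) := by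
  have hfin : {x : ℝ | ∃ k ≤ L.length, x = ((L.take k).sum : ℝ) ∧ m ≤ x}.Finite :=
    ((Set.finite_Iic L.length).image fun k => ((L.take k).sum : ℝ)).subset
      fun _ ⟨k, hk, hx, _⟩ => ⟨k, hk, hx.symm⟩
  have hne : {x : ℝ | ∃ k ≤ L.length, x = ((L.take k).sum : ℝ) ∧ m ≤ x}.Nonempty :=
    ⟨L.sum, L.length, le_rfl, by rw [List.take_length], hm⟩
  exact ⟨hne.csInf_mem hfin, fun _ hx => csInf_le hfin.bddBelow hx⟩

lemma sigmaM_reverse (L : List ℕ) (a : ℝ) :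
    sigmaM L.reverse a = sSup {x : ℝ | ∃ j ≤ L.length, x = ((L.drop j).sum : ℝ) ∧ x ≤ a} := by
  unfold sigmaM
  congr 1
  ext x
  simp only [Set.mem_ofPred_eq, List.length_reverse, List.sum_take_reverse]
  constructor
  · rintro ⟨k, -, rfl, hx⟩
    exact ⟨L.length - k, Nat.sub_le _ _, rfl, hx⟩
  · rintro ⟨j, hj, rfl, hx⟩
    exact ⟨L.length - j, Nat.sub_le _ _, by rw [Nat.sub_sub_self hj], hx⟩

lemma thetaM_reverse (L : List ℕ) {a : ℝ} (ha : 0 ≤ a) :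
    thetaM L.reverse a = thetaP L (L.sum - a) := by
  obtain ⟨⟨k, hk, hσ, hk_ge⟩, hleast⟩ := isLeast_sigmaP L (m := L.sum - a) (by linarith)
  have hsigmaM : sigmaM L.reverse a = L.sum - sigmaP L (L.sum - a) := by
    rw [sigmaM_reverse]
    refine IsGreatest.csSup_eq ⟨⟨k, hk, by rw [hσ, List.cast_sum_drop], ?_⟩, ?_⟩
    · linarith
    · rintro _ ⟨j, hj, rfl, hja⟩
      rw [List.cast_sum_drop] at hja ⊢
      linarith [hleast ⟨j, hj, rfl, by linarith⟩]
  unfold thetaM thetaP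
  rw [hsigmaM]
  ring

section Phi

lemma kPhi_spec {a : ℕ} {L : List ℕ} (h : kPhi a L ≠ 0) :
    kPhi a L ≤ L.length ∧ a ≤ (L.drop (kPhi a L)).sum := by
  have hne : {j | j ≤ L.length ∧ a ≤ (L.drop j).sum}.Nonempty := by
    by_contra hne
    rw [Set.not_nonempty_iff_eq_empty] at hne
    exact h (by rw [kPhi, hne, csSup_empty]; rfl)
  exact Nat.sSup_mem hne ⟨L.length, fun _ hj => hj.1⟩

lemma phi_eq_append {a : ℕ} {L : List ℕ} (h : kPhi a L ≠ 0) :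
    ∃ P : List ℕ, P.length = kPhi a L ∧ phi a L = P ++ L.drop (kPhi a L) := by
  refine ⟨_, ?_, by rw [phi, if_neg h]⟩
  have hk := (kPhi_spec h).1
  simp only [List.length_append, List.length_reverse, List.length_take, List.length_drop]
  omega

lemma length_phi (a : ℕ) (L : List ℕ) : (phi a L).length = L.length := by
  by_cases h : kPhi a L = 0
  · rw [phi, if_pos h]
  obtain ⟨P, hP, hphi⟩ := phi_eq_append h
  rw [hphi, List.length_append, List.length_drop, hP]
  have := (kPhi_spec h).1
  omega

lemma drop_phi {a : ℕ} {L : List ℕ} (h : kPhi a L ≠ 0) {j : ℕ} (hj : kPhi a L ≤ j) :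
    (phi a L).drop j = L.drop j := by
  obtain ⟨P, hP, hphi⟩ := phi_eq_append h
  rw [hphi, List.drop_append, List.drop_eq_nil_of_le (by omega), hP, List.drop_drop,
    Nat.add_sub_cancel' hj, List.nil_append]

lemma exists_drop_sum_iff {L M : List ℕ} {k : ℕ} {a x : ℝ} (hk : k ≤ L.length)
    (hlen : M.length = L.length) (hdrop : ∀ j, k ≤ j → M.drop j = L.drop j)
    (ha : a ≤ (L.drop k).sum) :
    (∃ j ≤ M.length, x = (M.drop j).sum ∧ x ≤ a) ↔
      (∃ j, k ≤ j ∧ j ≤ L.length ∧ x = (L.drop j).sum) ∧ x ≤ a := by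
  constructor
  · rintro ⟨j, hj, rfl, hx⟩
    refine ⟨?_, hx⟩
    rcases le_or_gt k j with hkj | hjk
    · exact ⟨j, hkj, hlen ▸ hj, by rw [hdrop j hkj]⟩
    · -- a suffix starting before `k` has sum `≥ a`, so it can only give `x = a = (L.drop k).sum`
      have hmono : ((M.drop k).sum : ℝ) ≤ (M.drop j).sum := by
        exact_mod_cast M.sum_drop_le_sum_drop hjk.le
      rw [hdrop k le_rfl] at hmono
      exact ⟨k, le_rfl, hk, by linarith⟩
  · rintro ⟨⟨j, hkj, hj, rfl⟩, hx⟩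
    exact ⟨j, hlen ▸ hj, by rw [hdrop j hkj], hx⟩

lemma thetaM_reverse_phi (a : ℕ) (L : List ℕ) :
    thetaM (phi a L).reverse a = thetaM L.reverse a := by
  by_cases h : kPhi a L = 0
  · rw [phi, if_pos h]
  obtain ⟨hk, ha⟩ := kPhi_spec h
  have hset : {x : ℝ | ∃ j ≤ (phi a L).length, x = ((phi a L).drop j).sum ∧ x ≤ a} =
      {x : ℝ | ∃ j ≤ L.length, x = (L.drop j).sum ∧ x ≤ a} := by
    ext x
    have ha' : (a : ℝ) ≤ (L.drop (kPhi a L)).sum := by exact_mod_cast ha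
    exact (exists_drop_sum_iff hk (length_phi a L) (fun _ => drop_phi h) ha').trans
      (exists_drop_sum_iff hk rfl (fun _ _ => rfl) ha').symm
  unfold thetaM
  rw [sigmaM_reverse, sigmaM_reverse, hset]

end Phi

section PIdx

variable {L : List ℕ} {m : ℕ}

lemma le_sum_take_pIdx (h : m ≤ L.sum) : m ≤ (L.take (pIdx L m)).sum :=
  Nat.sInf_mem (s := {k | m ≤ (L.take k).sum})
    ⟨L.length, by rwa [Set.mem_ofPred_eq, List.take_length]⟩

lemma pIdx_le_length (h : m ≤ L.sum) : pIdx L m ≤ L.length :=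
  Nat.sInf_le (by rwa [Set.mem_ofPred_eq, List.take_length])

lemma pIdx_pos (h0 : 0 < m) (h : m ≤ L.sum) : 0 < pIdx L m := by
  by_contra hp
  have := le_sum_take_pIdx h
  rw [Nat.eq_zero_of_not_pos hp, List.take_zero, List.sum_nil] at this
  omega

lemma sum_take_pred_pIdx_lt (h0 : 0 < m) : (L.take (pIdx L m - 1)).sum < m := by
  rcases Nat.eq_zero_or_pos (pIdx L m) with hp | hp
  · rw [hp, Nat.zero_sub, List.take_zero, List.sum_nil]
    exact h0
  · exact lt_of_not_ge fun hle =>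
      Nat.notMem_of_lt_sInf (s := {k | m ≤ (L.take k).sum}) (Nat.sub_lt hp one_pos) hle

lemma sum_take_pIdx (h0 : 0 < m) (h : m ≤ L.sum) :
    (L.take (pIdx L m)).sum = (L.take (pIdx L m - 1)).sum + ipPart L m := by
  obtain ⟨p, hp⟩ := Nat.exists_eq_add_one.2 (pIdx_pos h0 h)
  have hlt : p < L.length := by have := pIdx_le_length h; omega
  rw [ipPart, hp, Nat.add_sub_cancel, List.sum_take_succ _ _ hlt, List.getD_eq_getElem _ _ hlt]

lemma sVal_add_sum_take (h0 : 0 < m) : sVal L m + (L.take (pIdx L m - 1)).sum = m := by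
  have := sum_take_pred_pIdx_lt (L := L) h0
  unfold sVal
  omega

lemma one_le_sVal (h0 : 0 < m) : 1 ≤ sVal L m := by
  have := sum_take_pred_pIdx_lt (L := L) h0
  unfold sVal
  omega

lemma thetaP_eq_ipPart_sub_sVal (h0 : 0 < m) (h : m ≤ L.sum) :
    thetaP L m = (ipPart L m : ℝ) - sVal L m := by
  have hσ : sigmaP L m = (L.take (pIdx L m)).sum :=
    sigmaP_eq (pIdx_le_length h) (by exact_mod_cast le_sum_take_pIdx h) fun j hj =>
      L.sum_take_le_sum_take (Nat.sInf_le (show m ≤ (L.take j).sum by exact_mod_cast hj))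
  have hs : (sVal L m : ℝ) + (L.take (pIdx L m - 1)).sum = m := by
    exact_mod_cast sVal_add_sum_take h0
  unfold thetaP
  rw [hσ, sum_take_pIdx h0 h, Nat.cast_add]
  linarith

end PIdx

lemma e2_nonneg (L : List ℕ) : 0 ≤ e2 L := by
  induction L with
  | nil => exact le_rfl
  | cons x t ih =>
    rw [e2]
    positivity

lemma ipPart_sub_sVal_le_DeltaI_add_headI (L : List ℕ) (m : ℕ) (hs : 1 ≤ sVal L m) :
    (ipPart L m : ℝ) - sVal L m ≤ DeltaI L m + L.headI := by
  suffices (ipPart L m : ℤ) - sVal L m ≤ DeltaI L m + L.headI by exact_mod_cast this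
  unfold DeltaI
  split_ifs with h
  · have hs' : (1 : ℤ) ≤ sVal L m := by exact_mod_cast hs
    nlinarith
  · linarith [e2_nonneg ((ipPart L m - sVal L m) ::
      ((L.drop (pIdx L m)).take (qIdx L m - pIdx L m) ++ [tVal L m]))]

lemma thetaP_one_cons_two (i : ℕ) (t : List ℕ) (hi : 1 ≤ i) : thetaP (1 :: i :: t) 2 = i - 1 := by
  have hi' : (1 : ℝ) ≤ i := by exact_mod_cast hi
  have htake : (((1 :: i :: t).take 2).sum : ℝ) = 1 + i := by
    simp only [List.take_succ_cons, List.take_zero, List.sum_cons, List.sum_nil, add_zero,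
      Nat.cast_add, Nat.cast_one]
  have hσ : sigmaP (1 :: i :: t) 2 = 1 + i := by
    rw [← htake]
    refine sigmaP_eq (by simp) (by linarith) fun j hj => List.sum_take_le_sum_take _ ?_
    by_contra hj2
    interval_cases j <;> norm_num at hj
  unfold thetaP
  rw [hσ]
  ring

lemma DI_eq_thetaP_sub_thetaP {a b : ℕ} {L : List ℕ} (hL : L.sum = a + b + 1) :
    DI a b L = thetaP L 2 - thetaP L (b + 1 : ℕ) + DeltaI L (b + 1) := by
  unfold DI
  rw [thetaM_reverse_phi, thetaM_reverse L (Nat.cast_nonneg a), hL]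
  push_cast
  ring_nf

lemma two_le_of_wI_pos {i j : ℕ} {t : List ℕ} (hw : 0 < wI (i :: j :: t)) : 2 ≤ j := by
  have hj : j - 1 ≠ 0 := fun h => by
    rw [wI, List.map_cons, List.prod_cons, h, zero_mul, mul_zero] at hw
    exact lt_irrefl 0 hw
  omega

lemma List.exists_eq_one_cons_cons {L : List ℕ} (h1 : L.headI = 1) (h2 : 2 ≤ L.sum) :
    ∃ i t, L = 1 :: i :: t := by
  match L, h1, h2 with
  | [x], h1, h2 => simp_all
  | x :: i :: t, h1, _ => exact ⟨i, t, by rw [← h1]; rfl⟩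

theorem stmt10_general (a b n : ℕ) (h2 : 2 ≤ b) (hn : n = a + b + 1)
    (I : Composition n) (hw : 0 < wI I.blocks) (h1 : I.blocks.headI = 1) :
    0 ≤ DI a b I.blocks := by
  have hsum : I.blocks.sum = a + b + 1 := hn ▸ I.blocks_sum
  obtain ⟨i, t, hI⟩ := List.exists_eq_one_cons_cons h1 (by omega)
  have hi : (2 : ℝ) ≤ i := by exact_mod_cast two_le_of_wI_pos (hI ▸ hw)
  have hθ2 : thetaP I.blocks 2 = i - 1 := by
    rw [hI]
    exact thetaP_one_cons_two i t (by exact_mod_cast hi.trans' one_le_two)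
  have hΔ := ipPart_sub_sVal_le_DeltaI_add_headI I.blocks (b + 1) (one_le_sVal (by omega))
  rw [h1, Nat.cast_one] at hΔ
  rw [DI_eq_thetaP_sub_thetaP hsum, thetaP_eq_ipPart_sub_sVal (by omega) (by omega), hθ2]
  linarith

/-- If `w_I > 0` and `i₁ = 1`, then `D_I ≥ 0`. -/
theorem stmt10 (a b n : ℕ) (h2 : 2 ≤ b) (hba : b ≤ a) (hn : n = a + b + 1)
    (I : Composition n) (hw : 0 < wI I.blocks) (h1 : I.blocks.headI = 1) :
    0 ≤ DI a b I.blocks :=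
  stmt10_general a b n h2 hn I hw h1
end

section
/- Let a ≥ b ≥ 2, n = a+b+1, and let W = { I ⊨ n : all parts of I are ≥ 2 }. Define ψ(I) = \overline{L_I} R_I, where I = L_I R_I with R_I the longest suffix of I of modulus at most a (equivalently, L_I = i_1⋯i_p with p determined by b+1 = i_1+⋯+i_{p−1}+s, 1 ≤ s ≤ i_p), and \overline{L_I} is the reversal of L_I. Let W_≤ = { I ∈ W : i_1 ≤ Θ⁻_{Ī}(a) } and W_> = { I ∈ W : i_1 > Θ⁻_{Ī}(a) }. Then ψ(W_≤) ⊆ W_>. -/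
open scoped Classical
open MvPolynomial Finset

/-!
The first part of `ψ(I) = reverse(L_I) R_I` is the last part `i_p` of `L_I`, and the reversal of
`ψ(I)` starts with the reversal of `R_I`, a partial sum `|R_I| ≤ a`. Hence
`Θ⁻ ≤ a - |R_I| < i_p`, the strict inequality being the maximality of `R_I`:
`i_p R_I` is a suffix of modulus `> a`. Since `ψ` only permutes parts, `ψ(I) ∈ W`.
-/

theorem thetaM_le_sub_sum_of_prefix {P L : List ℕ} {a : ℝ} (hP : P <+: L)
    (hPa : (P.sum : ℝ) ≤ a) : thetaM L a ≤ a - P.sum := by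
  set S := {x : ℝ | ∃ k ≤ L.length, x = ((L.take k).sum : ℝ) ∧ x ≤ a}
  have hmem : (P.sum : ℝ) ∈ S :=
    ⟨P.length, hP.length_le, by rw [← List.prefix_iff_eq_take.mp hP], hPa⟩
  have hbdd : BddAbove S := ⟨a, fun _ ⟨_, _, _, hx⟩ => hx⟩
  exact sub_le_sub_left (le_csSup hbdd hmem) a

section rIdx

variable (a : ℕ) (l : List ℕ)

theorem rIdx_le_length : rIdx a l ≤ l.length :=
  Nat.sInf_le (by simp)

theorem sum_drop_rIdx_le : (l.drop (rIdx a l)).sum ≤ a :=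
  Nat.sInf_mem (s := {j | (l.drop j).sum ≤ a}) ⟨l.length, by simp⟩

variable {a l}

theorem rIdx_pos (h : a < l.sum) : 0 < rIdx a l := by
  refine Nat.pos_of_ne_zero fun h0 => ?_
  have := sum_drop_rIdx_le a l
  rw [h0, List.drop_zero] at this
  omega

theorem lt_sum_drop_pred_rIdx (h : 0 < rIdx a l) : a < (l.drop (rIdx a l - 1)).sum := by
  have : rIdx a l - 1 ∉ {j | (l.drop j).sum ≤ a} :=
    Nat.notMem_of_lt_sInf (by unfold rIdx at h ⊢; omega)
  simpa using this

end rIdx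

theorem psi_perm (a : ℕ) (l : List ℕ) : (psi a l).Perm l := by
  have h := (List.reverse_perm (l.take (rIdx a l))).append_right (l.drop (rIdx a l))
  rwa [List.take_append_drop] at h

theorem reverse_drop_rIdx_prefix_reverse_psi (a : ℕ) (l : List ℕ) :
    (l.drop (rIdx a l)).reverse <+: (psi a l).reverse := by
  rw [psi, List.reverse_append]
  exact List.prefix_append _ _

theorem headI_psi_of_rIdx_eq_succ {a k : ℕ} {l : List ℕ} (hk : rIdx a l = k + 1)
    (hkl : k < l.length) : (psi a l).headI = l[k] := by
  rw [psi, hk, List.take_add_one, List.getElem?_eq_getElem hkl, List.reverse_append]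
  rfl

theorem thetaM_reverse_psi_lt_headI {a : ℕ} {l : List ℕ} (h : a < l.sum) :
    thetaM (psi a l).reverse a < (psi a l).headI := by
  obtain ⟨k, hk⟩ := Nat.exists_eq_add_one_of_ne_zero (rIdx_pos h).ne'
  have hkl : k < l.length := by have := rIdx_le_length a l; omega
  set R := l.drop (rIdx a l)
  have hR : R.sum ≤ a := sum_drop_rIdx_le a l
  have hmaximal : a < l[k] + R.sum := by
    have := lt_sum_drop_pred_rIdx (rIdx_pos h)
    rwa [hk, Nat.add_sub_cancel, List.drop_eq_getElem_cons hkl, List.sum_cons, ← hk] at this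
  calc thetaM (psi a l).reverse a ≤ a - R.sum := by
        have := thetaM_le_sub_sum_of_prefix (a := a) (reverse_drop_rIdx_prefix_reverse_psi a l)
          (by rw [List.sum_reverse]; exact_mod_cast hR)
        rwa [List.sum_reverse] at this
    _ < l[k] := by
        rw [sub_lt_iff_lt_add]
        exact_mod_cast hmaximal
    _ = (psi a l).headI := by rw [headI_psi_of_rIdx_eq_succ hk hkl]

theorem stmt11_general (a b n : ℕ) (hn : n = a + b + 1)
    (I : Composition n) (hW : ∀ i ∈ I.blocks, 2 ≤ i) :
    (∀ i ∈ psi a I.blocks, 2 ≤ i) ∧ (psi a I.blocks).sum = n ∧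
      thetaM (psi a I.blocks).reverse a < ((psi a I.blocks).headI : ℝ) := by
  have hperm := psi_perm a I.blocks
  refine ⟨fun i hi => hW i (hperm.mem_iff.mp hi), hperm.sum_eq.trans I.blocks_sum, ?_⟩
  exact thetaM_reverse_psi_lt_headI (by rw [I.blocks_sum]; omega)

/-- `ψ(W_≤) ⊆ W_>`: if all parts of `I` are `≥ 2` and `i₁ ≤ Θ⁻_{Ī}(a)`, then `ψ(I)` is a
composition of `n` with all parts `≥ 2` whose first part exceeds `Θ⁻` of its reversal. -/
theorem stmt11 (a b n : ℕ) (h2 : 2 ≤ b) (hba : b ≤ a) (hn : n = a + b + 1)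
    (I : Composition n) (hW : ∀ i ∈ I.blocks, 2 ≤ i)
    (hle : (I.blocks.headI : ℝ) ≤ thetaM I.blocks.reverse a) :
    (∀ i ∈ psi a I.blocks, 2 ≤ i) ∧ (psi a I.blocks).sum = n ∧
      thetaM (psi a I.blocks).reverse a < ((psi a I.blocks).headI : ℝ) :=
  stmt11_general a b n hn I hW
end

section
/- Let a ≥ b ≥ 2, n = a+b+1, and I = i_1⋯i_z ∈ W_> (a composition of n with all parts ≥ 2 and i_1 > Θ⁻_{Ī}(a)). With p, q defined by b+1 = i_1+⋯+i_{p−1}+s = i_2+⋯+i_q+t (1 ≤ s ≤ i_p, 1 ≤ t ≤ i_{q+1}, i_{z+1} = i_1), one has q − p = max{ j : 0 ≤ j ≤ z−p, i_{p+j+1} + ⋯ + i_z > a − i_1 }. -/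
open scoped Classical
open MvPolynomial Finset

lemma sum_take_mono' (L : List ℕ) {k k' : ℕ} (h : k ≤ k') :
    (L.take k).sum ≤ (L.take k').sum := by
  calc (L.take k).sum = ((L.take k').take k).sum := by
        rw [List.take_take, Nat.min_eq_left h]
    _ ≤ ((L.take k').take k).sum + ((L.take k').drop k).sum := Nat.le_add_right _ _
    _ = (L.take k').sum := List.sum_take_add_sum_drop _ _

lemma sum_rev_take' (L : List ℕ) {k : ℕ} (hk : k ≤ L.length) :
    (L.reverse.take k).sum = (L.drop (L.length - k)).sum := by
  conv_lhs => rw [← List.take_append_drop (L.length - k) L, List.reverse_append]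
  rw [List.take_left' (by rw [List.length_reverse, List.length_drop]; omega),
    List.sum_reverse]

lemma key_lemma12 (a b : ℕ) (L : List ℕ) (hsum : L.sum = a + b + 1)
    (hgt : thetaM L.reverse a < (L.headI : ℝ)) :
    qIdx L (b + 1) - pIdx L (b + 1)
      = sSup {j | j ≤ L.length - pIdx L (b + 1) ∧
          (a : ℤ) - L.headI
            < ((L.drop (pIdx L (b + 1) + j)).sum : ℤ)} := by
  obtain ⟨x, t, rfl⟩ : ∃ x t, L = x :: t := by
    cases L with
    | nil => simp at hsum
    | cons x t => exact ⟨x, t, rfl⟩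
  simp only [List.headI_cons] at hgt ⊢
  have hlen : (x :: t).length = t.length + 1 := rfl
  set p := pIdx (x :: t) (b + 1) with hp
  set q := qIdx (x :: t) (b + 1) with hq
  have hp' : p = sInf {k | b + 1 ≤ ((x :: t).take k).sum} := rfl
  have hq' : q = sInf {k | b + 1 ≤ ((t ++ [x]).take k).sum} := rfl
  have hmono := fun {k k'} (h : k ≤ k') => sum_take_mono' (x :: t) h
  have hid : ∀ k, ((x :: t).take k).sum + ((x :: t).drop k).sum = a + b + 1 := by
    intro k; rw [List.sum_take_add_sum_drop]; exact hsum
  -- p facts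
  have hzmem : (x :: t).length ∈ {k | b + 1 ≤ ((x :: t).take k).sum} := by
    simp only [Set.mem_setOf_eq, List.take_length, hsum]; omega
  have hpz : p ≤ (x :: t).length := hp' ▸ Nat.sInf_le hzmem
  have hpm : b + 1 ≤ ((x :: t).take p).sum := by
    have := Nat.sInf_mem ⟨_, hzmem⟩
    rw [← hp'] at this; exact this
  have hplt : ∀ k, k < p → ((x :: t).take k).sum < b + 1 := by
    intro k hk
    have : k ∉ {k | b + 1 ≤ ((x :: t).take k).sum} :=
      Nat.notMem_of_lt_sInf (hp' ▸ hk)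
    simpa [Set.mem_setOf_eq] using Nat.lt_of_not_le this
  -- q facts
  have hTsum : (t ++ [x]).sum = a + b + 1 := by
    simp only [List.sum_cons] at hsum; simp [List.sum_append]; omega
  have hzmemT : t.length + 1 ∈ {k | b + 1 ≤ ((t ++ [x]).take k).sum} := by
    have hlT : (t ++ [x]).length = t.length + 1 := by simp
    simp only [Set.mem_setOf_eq, ← hlT, List.take_length, hTsum]; omega
  have hqz : q ≤ t.length + 1 := hq' ▸ Nat.sInf_le hzmemT
  have hqm : b + 1 ≤ ((t ++ [x]).take q).sum := by
    have := Nat.sInf_mem ⟨_, hzmemT⟩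
    rw [← hq'] at this; exact this
  have hqlt : ∀ k, k < q → ((t ++ [x]).take k).sum < b + 1 := by
    intro k hk
    have : k ∉ {k | b + 1 ≤ ((t ++ [x]).take k).sum} :=
      Nat.notMem_of_lt_sInf (hq' ▸ hk)
    simpa [Set.mem_setOf_eq] using Nat.lt_of_not_le this
  have hgf : ∀ k, k ≤ t.length →
      ((t ++ [x]).take k).sum + x = ((x :: t).take (k + 1)).sum := by
    intro k hk
    rw [List.take_append_of_le_length hk, List.take_succ_cons, List.sum_cons]
    omega
  -- Step B: compute sigmaM of the reverse
  have hdrople : ((x :: t).drop p).sum ≤ a := by have := hid p; omega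
  have hsig : sigmaM (x :: t).reverse (a : ℝ) = (((x :: t).drop p).sum : ℝ) := by
    apply IsGreatest.csSup_eq
    constructor
    · refine ⟨(x :: t).length - p, by simp, ?_, by exact_mod_cast hdrople⟩
      have h1 : ((x :: t).reverse.take ((x :: t).length - p)).sum
          = ((x :: t).drop p).sum := by
        rw [sum_rev_take' _ (Nat.sub_le _ _)]
        congr 2
        omega
      rw [h1]
    · rintro y ⟨k, hk, rfl, hya⟩
      rw [List.length_reverse] at hk
      rw [sum_rev_take' _ hk] at hya ⊢
      by_cases hjp : p ≤ (x :: t).length - k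
      · have h1 := hid ((x :: t).length - k)
        have h2 := hid p
        have h3 := hmono hjp
        exact_mod_cast
          (by omega : (((x :: t)).drop ((x :: t).length - k)).sum ≤ ((x :: t).drop p).sum)
      · exfalso
        have h1 := hplt ((x :: t).length - k) (by omega)
        have h2 := hid ((x :: t).length - k)
        have h3 : (((x :: t)).drop ((x :: t).length - k)).sum ≤ a := by exact_mod_cast hya
        omega
  have hB : a < ((x :: t).drop p).sum + x := by
    rw [thetaM, hsig] at hgt
    have : (a : ℝ) < (((x :: t).drop p).sum : ℝ) + x := by linarith
    exact_mod_cast this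
  have hfp : ((x :: t).take p).sum ≤ b + x := by have := hid p; omega
  -- q ≥ 1 and p ≤ q
  have hq1 : 1 ≤ q := by
    rcases Nat.eq_zero_or_pos q with h | h
    · exfalso; have := hqm; rw [h] at this; simp at this
    · exact h
  have hpq : p ≤ q := by
    by_contra hcon
    push_neg at hcon
    have hqt : q ≤ t.length := by omega
    have h1 := hgf q hqt
    have h2 := hmono (show q + 1 ≤ p by omega)
    omega
  have hfq : ((x :: t).take q).sum ≤ b + x := by
    have h1 := hqlt (q - 1) (by omega)
    have h2 := hgf (q - 1) (by omega)
    have h3 : q - 1 + 1 = q := by omega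
    rw [h3] at h2
    have h4 := hmono (show 1 ≤ q from hq1)
    have h5 : ((x :: t).take 1).sum = x := by simp
    omega
  have hdq := hid q
  -- membership of q - p
  have hmem : q - p ∈ {j | j ≤ (x :: t).length - p ∧
      (a : ℤ) - x < (((x :: t).drop (p + j)).sum : ℤ)} := by
    constructor
    · simp only [hlen]; omega
    · have hpj : p + (q - p) = q := by omega
      rw [hpj]
      omega
  -- upper bound
  have hub : ∀ j ∈ {j | j ≤ (x :: t).length - p ∧
      (a : ℤ) - x < (((x :: t).drop (p + j)).sum : ℤ)}, j ≤ q - p := by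
    rintro j ⟨hj1, hj2⟩
    simp only [hlen] at hj1
    have hfk := hid (p + j)
    have hfk2 : ((x :: t).take (p + j)).sum ≤ b + x := by omega
    by_contra hcon
    push_neg at hcon
    have hqt : q ≤ t.length := by omega
    have h1 := hgf q hqt
    have h2 := hmono (show q + 1 ≤ p + j by omega)
    omega
  exact le_antisymm
    (le_csSup ⟨(x :: t).length - p, fun j hj => hj.1⟩ hmem)
    (csSup_le ⟨_, hmem⟩ hub)

/-- For `I ∈ W_>`, `q − p = max{ j ≤ z − p : i_{p+j+1} + ⋯ + i_z > a − i₁ }`. -/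
theorem stmt12 (a b n : ℕ) (h2 : 2 ≤ b) (hba : b ≤ a) (hn : n = a + b + 1)
    (I : Composition n) (hW : ∀ i ∈ I.blocks, 2 ≤ i)
    (hgt : thetaM I.blocks.reverse a < (I.blocks.headI : ℝ)) :
    qIdx I.blocks (b + 1) - pIdx I.blocks (b + 1)
      = sSup {j | j ≤ I.blocks.length - pIdx I.blocks (b + 1) ∧
          (a : ℤ) - I.blocks.headI
            < ((I.blocks.drop (pIdx I.blocks (b + 1) + j)).sum : ℤ)} := by
  exact key_lemma12 a b I.blocks (I.blocks_sum.trans hn) hgt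
end

section
/- Let a ≥ b ≥ 2, n = a+b+1, I ∈ W_> with parameters p, q as above. For 0 ≤ r ≤ q − p, define H_r = \overline{L_r} R_r, where L_r = i_1⋯i_{p+r} and R_r = i_{p+r+1}⋯i_z and \overline{L_r} reverses L_r. Then for each 1 ≤ r ≤ q − p, the longest suffix of H_r of modulus at most a is exactly R_r, and moreover ψ^{-1}(I) ∩ W_≤ = { H_1, …, H_{q−p} }. -/
open scoped Classical
open MvPolynomial Finset

namespace Stmt13Aux

lemma headI_eq_sum_take_one (l : List ℕ) : l.headI = (l.take 1).sum := by
  cases l <;> simp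

lemma sum_drop_le_sum (l : List ℕ) (j : ℕ) : (l.drop j).sum ≤ l.sum := by
  have := List.sum_take_add_sum_drop l j; omega

lemma sum_take_le_sum (l : List ℕ) (j : ℕ) : (l.take j).sum ≤ l.sum := by
  have := List.sum_take_add_sum_drop l j; omega

lemma sum_drop_anti (l : List ℕ) {i j : ℕ} (h : i ≤ j) :
    (l.drop j).sum ≤ (l.drop i).sum := by
  have : l.drop j = (l.drop i).drop (j - i) := by
    rw [List.drop_drop, Nat.add_sub_cancel' h]
  rw [this]
  exact sum_drop_le_sum _ _

lemma sum_take_mono (l : List ℕ) {i j : ℕ} (h : i ≤ j) :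
    (l.take i).sum ≤ (l.take j).sum := by
  have : l.take i = (l.take j).take i := by rw [List.take_take, Nat.min_eq_left h]
  rw [this]
  exact sum_take_le_sum _ _

lemma sInf_le_iff_mem {S : Set ℕ} (hne : S.Nonempty)
    (hup : ∀ i j, i ≤ j → i ∈ S → j ∈ S) (k : ℕ) : sInf S ≤ k ↔ k ∈ S :=
  ⟨fun h => hup _ _ h (Nat.sInf_mem hne), fun h => Nat.sInf_le h⟩

/-- the drop-sum formula for `H = (B.take m).reverse ++ B.drop m`. -/
lemma sum_drop_rev (B : List ℕ) {m j : ℕ} (hm : m ≤ B.length) (hj : j ≤ m) :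
    (((B.take m).reverse ++ B.drop m).drop j).sum
      = (B.take (m - j)).sum + (B.drop m).sum := by
  have hlen : (B.take m).reverse.length = m := by
    rw [List.length_reverse, List.length_take]; omega
  rw [List.drop_append_of_le_length (by rw [hlen]; exact hj), List.sum_append,
    List.drop_reverse, List.sum_reverse, List.length_take, Nat.min_eq_left hm,
    List.take_take, Nat.min_eq_left (Nat.sub_le _ _)]

/-- `rIdx` characterization. -/
lemma rIdx_le_iff (a : ℕ) (K : List ℕ) (j : ℕ) :
    rIdx a K ≤ j ↔ (K.drop j).sum ≤ a := by
  unfold rIdx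
  exact sInf_le_iff_mem (S := {j | (K.drop j).sum ≤ a}) ⟨K.length, show (K.drop K.length).sum ≤ a by simp⟩
    (fun i j hij hi => le_trans (sum_drop_anti K hij) hi) j

lemma rIdx_le_length (a : ℕ) (K : List ℕ) : rIdx a K ≤ K.length := by
  rw [rIdx_le_iff]; simp

lemma sigmaM_reverse (K : List ℕ) (a : ℕ) :
    sigmaM K.reverse (a : ℝ) = ((K.drop (rIdx a K)).sum : ℝ) := by
  set ρ := rIdx a K with hρ
  have hρl : ρ ≤ K.length := rIdx_le_length a K
  have hρa : (K.drop ρ).sum ≤ a := (rIdx_le_iff a K ρ).1 le_rfl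
  have hmem : ((K.drop ρ).sum : ℝ) ∈
      {x : ℝ | ∃ k ≤ K.reverse.length, x = ((K.reverse.take k).sum : ℝ) ∧ x ≤ (a : ℝ)} := by
    refine ⟨K.length - ρ, by simp, ?_, by exact_mod_cast hρa⟩
    rw [List.take_reverse, List.sum_reverse, Nat.sub_sub_self hρl]
  unfold sigmaM
  apply le_antisymm
  · apply csSup_le ⟨_, hmem⟩
    rintro x ⟨k, hk, rfl, hxa⟩
    rw [List.take_reverse, List.sum_reverse]
    have hna : (K.drop (K.length - k)).sum ≤ a := by
      rw [List.take_reverse, List.sum_reverse] at hxa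
      exact Nat.cast_le.mp hxa
    have : ρ ≤ K.length - k := (rIdx_le_iff a K _).2 hna
    exact Nat.cast_le.mpr (sum_drop_anti K this)
  · exact le_csSup ⟨(a : ℝ), fun x ⟨k, hk, hxe, hxa⟩ => hxa⟩ hmem

lemma thetaM_reverse (K : List ℕ) (a : ℕ) :
    thetaM K.reverse (a : ℝ) = (a : ℝ) - ((K.drop (rIdx a K)).sum : ℝ) := by
  rw [thetaM, sigmaM_reverse]

end Stmt13Aux

/-- For `I ∈ W_>` and `1 ≤ r ≤ q − p`, the longest suffix of `H_r = reverse(L_r) R_r` of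
modulus at most `a` is exactly `R_r`, and `ψ⁻¹(I) ∩ W_≤ = {H₁, …, H_{q−p}}`. -/
theorem stmt13 (a b n : ℕ) (h2 : 2 ≤ b) (hba : b ≤ a) (hn : n = a + b + 1)
    (I : Composition n) (hW : ∀ i ∈ I.blocks, 2 ≤ i)
    (hgt : thetaM I.blocks.reverse a < (I.blocks.headI : ℝ)) :
    (∀ r, 1 ≤ r → r ≤ qIdx I.blocks (b + 1) - pIdx I.blocks (b + 1) →
      rIdx a ((I.blocks.take (pIdx I.blocks (b + 1) + r)).reverse
          ++ I.blocks.drop (pIdx I.blocks (b + 1) + r))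
        = pIdx I.blocks (b + 1) + r) ∧
    {J : Composition n | (∀ i ∈ J.blocks, 2 ≤ i) ∧
        (J.blocks.headI : ℝ) ≤ thetaM J.blocks.reverse a ∧ psi a J.blocks = I.blocks}
      = {J : Composition n | ∃ r, 1 ≤ r ∧
          r ≤ qIdx I.blocks (b + 1) - pIdx I.blocks (b + 1) ∧
          J.blocks = (I.blocks.take (pIdx I.blocks (b + 1) + r)).reverse
            ++ I.blocks.drop (pIdx I.blocks (b + 1) + r)} := by
  classical
  have hBsum : I.blocks.sum = n := I.blocks_sum
  set B := I.blocks with hBdef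
  have hBne : B ≠ [] := by
    intro h; rw [h] at hBsum; simp at hBsum; omega
  have hz1 : 1 ≤ B.length := List.length_pos_iff.mpr hBne
  set p := pIdx B (b + 1) with hpdef
  set q := qIdx B (b + 1) with hqdef
  have hpiff : ∀ k, p ≤ k ↔ b + 1 ≤ (B.take k).sum := by
    intro k
    rw [hpdef]; unfold pIdx
    exact Stmt13Aux.sInf_le_iff_mem (S := {k | b + 1 ≤ (B.take k).sum})
      ⟨B.length, show b + 1 ≤ (B.take B.length).sum by
        rw [List.take_length, hBsum]; omega⟩
      (fun i j hij hi => le_trans hi (Stmt13Aux.sum_take_mono B hij)) k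
  set C := B.tail ++ B.take 1 with hCdef
  have hClen : C.length = B.length := by
    rw [hCdef, List.length_append, List.length_tail, List.length_take]; omega
  have hCsum : C.sum = n := by
    rw [hCdef, List.sum_append, ← List.drop_one, Nat.add_comm,
      List.sum_take_add_sum_drop, hBsum]
  have hqiff : ∀ k, q ≤ k ↔ b + 1 ≤ (C.take k).sum := by
    intro k
    rw [hqdef]; unfold qIdx
    rw [← hCdef]
    exact Stmt13Aux.sInf_le_iff_mem (S := {k | b + 1 ≤ (C.take k).sum})
      ⟨B.length, show b + 1 ≤ (C.take B.length).sum by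
        rw [List.take_of_length_le (by omega), hCsum]; omega⟩
      (fun i j hij hi => le_trans hi (Stmt13Aux.sum_take_mono C hij)) k
  have hqz : q ≤ B.length := (hqiff B.length).2 (by
    rw [List.take_of_length_le (by omega), hCsum]; omega)
  have hp1 : 1 ≤ p := by
    by_contra h
    have := (hpiff 0).1 (by omega)
    simp at this
  have hTS : ∀ k, k + 1 ≤ B.length →
      (C.take k).sum + (B.take 1).sum = (B.take (k + 1)).sum := by
    intro k hk
    have h1 : C.take k = B.tail.take k := by
      rw [hCdef, List.take_append_of_le_length (by rw [List.length_tail]; omega)]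
    have h2 : B.take (k + 1) = B.take 1 ++ (B.drop 1).take k := by
      rw [Nat.add_comm, List.take_add]
    rw [h1, ← List.drop_one, h2, List.sum_append]; omega
  have key : ∀ m, p + 1 ≤ m → m ≤ q →
      rIdx a ((B.take m).reverse ++ B.drop m) = m := by
    intro m h1 h2
    have hmz : m ≤ B.length := le_trans h2 hqz
    have hd0 : (B.take m).sum + (B.drop m).sum = n := by
      rw [List.sum_take_add_sum_drop, hBsum]
    have hSm : b + 1 ≤ (B.take m).sum := (hpiff m).1 (by omega)
    have hmem : (((B.take m).reverse ++ B.drop m).drop m).sum ≤ a := by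
      rw [Stmt13Aux.sum_drop_rev B hmz le_rfl]
      simp only [Nat.sub_self, List.take_zero, List.sum_nil, Nat.zero_add]
      omega
    have hT : ¬ b + 1 ≤ (C.take (m - 1)).sum := fun h => by
      have := (hqiff (m - 1)).2 h; omega
    have hTm := hTS (m - 1) (by omega)
    rw [show m - 1 + 1 = m by omega] at hTm
    have hnot : ¬ (((B.take m).reverse ++ B.drop m).drop (m - 1)).sum ≤ a := by
      rw [Stmt13Aux.sum_drop_rev B hmz (by omega), show m - (m - 1) = 1 by omega]
      omega
    have hle := (Stmt13Aux.rIdx_le_iff a _ m).2 hmem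
    have hgt' : ¬ rIdx a ((B.take m).reverse ++ B.drop m) ≤ m - 1 :=
      fun h => hnot ((Stmt13Aux.rIdx_le_iff a _ (m - 1)).1 h)
    omega
  refine ⟨fun r hr1 hr2 => key (p + r) (by omega) (by omega), ?_⟩
  ext J
  simp only [Set.mem_setOf_eq]
  constructor
  · rintro ⟨hJ2, hle, hpsi⟩
    have hKsum : J.blocks.sum = n := J.blocks_sum
    set K := J.blocks with hKdef
    set ρ := rIdx a K with hρdef
    have hρlen : ρ ≤ K.length := Stmt13Aux.rIdx_le_length a K
    have hρa : (K.drop ρ).sum ≤ a := (Stmt13Aux.rIdx_le_iff a K ρ).1 (by omega)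
    unfold psi at hpsi
    rw [← hρdef] at hpsi
    have hXlen : ((K.take ρ).reverse).length = ρ := by
      rw [List.length_reverse, List.length_take]; omega
    have htake : K.take ρ = (B.take ρ).reverse := by
      have h1 : B.take ρ = (K.take ρ).reverse := by
        rw [← hpsi, List.take_append_of_le_length (le_of_eq hXlen.symm),
          List.take_of_length_le (le_of_eq hXlen)]
      rw [h1, List.reverse_reverse]
    have hdrop : K.drop ρ = B.drop ρ := by
      conv_rhs => rw [← hpsi]
      rw [List.drop_append_of_le_length (le_of_eq hXlen.symm),
        List.drop_eq_nil_of_le (le_of_eq hXlen), List.nil_append]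
    have hKeq : K = (B.take ρ).reverse ++ B.drop ρ := by
      conv_lhs => rw [← List.take_append_drop ρ K]
      rw [htake, hdrop]
    have hzK : B.length = K.length := by
      rw [← hpsi, List.length_append, List.length_reverse, List.length_take, List.length_drop]
      omega
    have hρ1 : 1 ≤ ρ := by
      by_contra h
      have hρ0 : ρ = 0 := by omega
      have hKB : K = B := by rw [hKeq, hρ0]; simp
      rw [hKB] at hle
      linarith
    have hθ := Stmt13Aux.thetaM_reverse K a
    rw [← hρdef] at hθ
    rw [hθ] at hle
    have hle' : K.headI + (K.drop ρ).sum ≤ a := by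
      have h' : ((K.headI : ℝ)) + ((K.drop ρ).sum : ℝ) ≤ (a : ℝ) := by linarith
      exact_mod_cast h'
    have hd0 : (B.take ρ).sum + (B.drop ρ).sum = n := by
      rw [List.sum_take_add_sum_drop, hBsum]
    have h1K : K.headI + (K.drop 1).sum = n := by
      rw [Stmt13Aux.headI_eq_sum_take_one, List.sum_take_add_sum_drop, hKsum]
    have hdrop1 : (K.drop 1).sum = (B.take (ρ - 1)).sum + (B.drop ρ).sum := by
      rw [hKeq]
      exact Stmt13Aux.sum_drop_rev B (by omega) (by omega)
    have hdropρ : (K.drop ρ).sum = (B.drop ρ).sum := by rw [hdrop]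
    have hSρ1 : b + 1 ≤ (B.take (ρ - 1)).sum := by omega
    have hpρ : p + 1 ≤ ρ := by
      have := (hpiff (ρ - 1)).2 hSρ1; omega
    have hnot : ¬ (K.drop (ρ - 1)).sum ≤ a := by
      intro h
      have := (Stmt13Aux.rIdx_le_iff a K (ρ - 1)).2 h
      omega
    have hdropρ1 : (K.drop (ρ - 1)).sum = (B.take 1).sum + (B.drop ρ).sum := by
      rw [hKeq, Stmt13Aux.sum_drop_rev B (by omega) (by omega),
        show ρ - (ρ - 1) = 1 by omega]
    have hTm := hTS (ρ - 1) (by omega)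
    rw [show ρ - 1 + 1 = ρ by omega] at hTm
    have hρq : ρ ≤ q := by
      by_contra h
      have := (hqiff (ρ - 1)).1 (by omega)
      omega
    exact ⟨ρ - p, by omega, by omega, by
      rw [show p + (ρ - p) = ρ by omega]; exact hKeq⟩
  · rintro ⟨r, hr1, hr2, hJb⟩
    have hpq : p + r ≤ q := by omega
    set m := p + r with hmdef
    have hmz : m ≤ B.length := le_trans hpq hqz
    have hrm : rIdx a ((B.take m).reverse ++ B.drop m) = m := key m (by omega) hpq
    have hd0 : (B.take m).sum + (B.drop m).sum = n := by
      rw [List.sum_take_add_sum_drop, hBsum]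
    have hSm1 : b + 1 ≤ (B.take (m - 1)).sum := (hpiff (m - 1)).1 (by omega)
    have hHsum : ((B.take m).reverse ++ B.drop m).sum = n := by
      rw [List.sum_append, List.sum_reverse]; omega
    have hh : ((B.take m).reverse ++ B.drop m).headI
        + (((B.take m).reverse ++ B.drop m).drop 1).sum = n := by
      rw [Stmt13Aux.headI_eq_sum_take_one, List.sum_take_add_sum_drop, hHsum]
    have h1 : (((B.take m).reverse ++ B.drop m).drop 1).sum
        = (B.take (m - 1)).sum + (B.drop m).sum :=
      Stmt13Aux.sum_drop_rev B hmz (by omega)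
    have hdm : (((B.take m).reverse ++ B.drop m).drop m).sum = (B.drop m).sum := by
      rw [Stmt13Aux.sum_drop_rev B hmz le_rfl]
      simp only [Nat.sub_self, List.take_zero, List.sum_nil, Nat.zero_add]
    have key2 : ((B.take m).reverse ++ B.drop m).headI
        + (((B.take m).reverse ++ B.drop m).drop m).sum ≤ a := by omega
    have hXlen : ((B.take m).reverse).length = m := by
      rw [List.length_reverse, List.length_take]; omega
    refine ⟨?_, ?_, ?_⟩
    · intro i hi
      rw [hJb] at hi
      rcases List.mem_append.1 hi with h | h
      · exact hW _ (List.mem_of_mem_take (List.mem_reverse.1 h))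
      · exact hW _ (List.mem_of_mem_drop h)
    · rw [hJb, Stmt13Aux.thetaM_reverse, hrm]
      have h' : ((((B.take m).reverse ++ B.drop m).headI : ℝ))
          + ((((B.take m).reverse ++ B.drop m).drop m).sum : ℝ) ≤ (a : ℝ) := by
        exact_mod_cast key2
      linarith
    · rw [hJb]
      unfold psi
      rw [hrm, List.take_append_of_le_length (le_of_eq hXlen.symm),
        List.take_of_length_le (le_of_eq hXlen),
        List.drop_append_of_le_length (le_of_eq hXlen.symm),
        List.drop_eq_nil_of_le (le_of_eq hXlen), List.nil_append,
        List.reverse_reverse, List.take_append_drop]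
end

section
/- Let a ≥ b ≥ 2, n = a+b+1, and I = i_1⋯i_z ∈ W_≤ (all parts ≥ 2 and i_1 ≤ i_p − s). Then D_I = (s−1)(i_p − s − i_1) − 2 ≥ −2, and if D_I < 0 then s ∈ {1, 2, i_p − i_1}. -/
open scoped Classical
open MvPolynomial Finset

/-! Cut `I = P · i_p · Q` at the block containing position `b + 1`, so `|P| + s = b + 1` and
`|Q| = a + s − i_p`. Since `i₁ + s ≤ i_p`, this gives `|Q| < a < |i_p Q|`: the shortest suffix of
modulus `≥ a` is `i_p Q`, which `φ` leaves in place, so the partial sums of `reverse (φ I)` jump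
from `|Q|` over `a`, and `Θ⁻ = a − |Q| = i_p − s`. As `i₁ ≥ 2`, `Θ⁺_I(2) = i₁ − 2`, and adding
`Δ_I(b+1) = s(i_p − s − i₁)` gives the formula. The rest is arithmetic: both factors of
`(s − 1)(i_p − s − i₁)` are nonnegative integers, so the product is `< 2` only if one factor is
`0` or the first is `1`. -/

theorem sigmaP_cons {c : ℝ} (x : ℕ) (R : List ℕ) (hc : 0 < c) (hcx : c ≤ x) :
    sigmaP (x :: R) c = x := by
  refine IsLeast.csInf_eq ⟨⟨1, by simp, by simp, hcx⟩, ?_⟩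
  rintro _ ⟨_ | k, -, rfl, hk⟩
  · simp only [List.take_zero, List.sum_nil, Nat.cast_zero] at hk
    linarith
  · simp only [List.take_succ_cons, List.sum_cons, Nat.cast_add, le_add_iff_nonneg_right]
    positivity

theorem sigmaM_append_cons {c : ℝ} (M R : List ℕ) (x : ℕ) (hM : (M.sum : ℝ) ≤ c)
    (hx : c < M.sum + x) : sigmaM (M ++ x :: R) c = M.sum := by
  refine IsGreatest.csSup_eq ⟨⟨M.length, by simp, by rw [List.take_left], hM⟩, ?_⟩
  rintro _ ⟨k, -, rfl, hk⟩
  by_cases hkM : k ≤ M.length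
  · rw [List.take_append_of_le_length hkM]
    exact_mod_cast (List.take_sublist k M).sum_le_sum fun _ _ => Nat.zero_le _
  · have hpre : M ++ [x] <+: (M ++ x :: R).take k := by
      have h := List.take_prefix_take_left (l := M ++ x :: R) (show M.length + 1 ≤ k by omega)
      rwa [show (M ++ x :: R).take (M.length + 1) = M ++ [x] by simp [List.take_append]] at h
    have hsum : M.sum + x ≤ ((M ++ x :: R).take k).sum := by
      simpa using hpre.sublist.sum_le_sum fun _ _ => Nat.zero_le _
    have : (M.sum : ℝ) + x ≤ ((M ++ x :: R).take k).sum := by exact_mod_cast hsum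
    linarith

theorem exists_eq_append_ipPart_cons {I : List ℕ} {m : ℕ} (hm : 0 < m) (hI : m ≤ I.sum) :
    ∃ P Q, I = P ++ ipPart I m :: Q ∧ P.sum + sVal I m = m ∧ 0 < sVal I m := by
  obtain ⟨p, hp⟩ : ∃ p, pIdx I m = p := ⟨_, rfl⟩
  simp only [ipPart, sVal, hp]
  have hmem : I.length ∈ {k | m ≤ (I.take k).sum} := by simpa using hI
  have hpS : m ≤ (I.take p).sum := hp ▸ Nat.sInf_mem ⟨_, hmem⟩
  have hpI : p ≤ I.length := hp ▸ Nat.sInf_le hmem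
  have hp0 : p ≠ 0 := by
    rintro rfl
    rw [List.take_zero, List.sum_nil] at hpS
    omega
  have hlt : (I.take (p - 1)).sum < m :=
    not_le.mp <| Nat.notMem_of_lt_sInf (s := {k | m ≤ (I.take k).sum})
      (by unfold pIdx at hp; omega)
  have hpred : p - 1 + 1 = p := Nat.sub_add_cancel (Nat.one_le_iff_ne_zero.mpr hp0)
  have hsucc := List.sum_take_succ I (p - 1) (by omega)
  have hsplit := List.take_append_drop (p - 1) I
  rw [hpred] at hsucc
  rw [List.drop_eq_getElem_cons (by omega), hpred] at hsplit
  refine ⟨I.take (p - 1), I.drop p, ?_, by omega, by omega⟩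
  rw [List.getD_eq_getElem I 0 (by omega), hsplit]

theorem kPhi_append_cons {a x : ℕ} (P Q : List ℕ) (hQ : Q.sum < a) (hxQ : a ≤ x + Q.sum) :
    kPhi a (P ++ x :: Q) = P.length := by
  refine IsGreatest.csSup_eq ⟨⟨by simp, by simpa [List.drop_left] using hxQ⟩, ?_⟩
  rintro j ⟨-, hja⟩
  by_contra! hj
  have hsub : ((P ++ x :: Q).drop j).Sublist Q := by
    have h := List.drop_sublist_drop_left (P ++ x :: Q) (show P.length + 1 ≤ j by omega)
    rwa [show (P ++ x :: Q).drop (P.length + 1) = Q by simp [List.drop_append]] at h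
  have := hsub.sum_le_sum fun _ _ => Nat.zero_le _
  omega

theorem exists_phi_append_cons {a x : ℕ} (P Q : List ℕ) (hk : kPhi a (P ++ x :: Q) = P.length) :
    ∃ F, phi a (P ++ x :: Q) = F ++ x :: Q := by
  unfold phi
  rw [hk]
  split_ifs with h
  · exact ⟨[], by simp [List.length_eq_zero_iff.mp h]⟩
  · exact ⟨_, by rw [List.drop_left]⟩

theorem thetaM_reverse_phi_append_cons {a x : ℕ} (P Q : List ℕ) (hQ : Q.sum < a)
    (hxQ : a < x + Q.sum) : thetaM (phi a (P ++ x :: Q)).reverse a = a - Q.sum := by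
  obtain ⟨F, hF⟩ := exists_phi_append_cons P Q (kPhi_append_cons P Q hQ hxQ.le)
  rw [thetaM, hF, List.reverse_append, List.reverse_cons, List.append_assoc, List.singleton_append,
    sigmaM_append_cons, List.sum_reverse]
  · rw [List.sum_reverse]
    exact_mod_cast hQ.le
  · rw [List.sum_reverse]
    exact_mod_cast (by omega : a < Q.sum + x)

theorem DI_eq_of_headI_le {a b : ℕ} {B : List ℕ} (hsum : B.sum = a + b + 1) (hhead : 2 ≤ B.headI)
    (hle : (B.headI : ℤ) ≤ (ipPart B (b + 1) : ℤ) - sVal B (b + 1)) :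
    DI a b B = ((sVal B (b + 1) : ℝ) - 1)
      * ((ipPart B (b + 1) : ℝ) - sVal B (b + 1) - B.headI) - 2 := by
  obtain ⟨P, Q, hB, hPs, hs⟩ := exists_eq_append_ipPart_cons (I := B) (m := b + 1) (by omega)
    (by omega)
  have hQ : Q.sum + ipPart B (b + 1) = a + sVal B (b + 1) := by
    rw [hB, List.sum_append, List.sum_cons] at hsum
    omega
  have hθP : thetaP B 2 = B.headI - 2 := by
    obtain ⟨x, R, rfl⟩ := List.exists_cons_of_ne_nil (show B ≠ [] by rintro rfl; simp at hhead)
    rw [thetaP, sigmaP_cons x R two_pos (by exact_mod_cast hhead), List.headI_cons]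
  have hθM : thetaM (phi a B).reverse a = ipPart B (b + 1) - sVal B (b + 1) := by
    have h := thetaM_reverse_phi_append_cons P Q (a := a) (x := ipPart B (b + 1))
      (by omega) (by omega)
    rw [← hB] at h
    rw [h]
    have : (Q.sum : ℝ) + ipPart B (b + 1) = a + sVal B (b + 1) := by exact_mod_cast hQ
    linarith
  have hΔ : DeltaI B (b + 1)
      = sVal B (b + 1) * ((ipPart B (b + 1) : ℤ) - sVal B (b + 1) - B.headI) := if_pos hle
  rw [DI, hθP, hθM, hΔ]
  push_cast
  ring

theorem neg_two_le_and_eq_of_neg {s i h : ℕ} (hs : 0 < s) (hle : (h : ℤ) ≤ i - s) :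
    -2 ≤ ((s : ℝ) - 1) * ((i : ℝ) - s - h) - 2 ∧
      (((s : ℝ) - 1) * ((i : ℝ) - s - h) - 2 < 0 → s = 1 ∨ s = 2 ∨ s = i - h) := by
  have hu : (0 : ℤ) ≤ s - 1 := by omega
  have hv : (0 : ℤ) ≤ i - s - h := by omega
  constructor
  · have : (0 : ℝ) ≤ ((s : ℝ) - 1) * ((i : ℝ) - s - h) := by exact_mod_cast mul_nonneg hu hv
    linarith
  · intro hneg
    have hlt : ((s : ℤ) - 1) * ((i : ℤ) - s - h) < 2 := by
      have : ((s : ℝ) - 1) * ((i : ℝ) - s - h) < 2 := by linarith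
      exact_mod_cast this
    have : (s : ℤ) - 1 ≤ 1 ∨ (i : ℤ) - s - h = 0 := by
      by_contra! hc
      obtain ⟨hu2, hv0⟩ := hc
      have hv1 : (1 : ℤ) ≤ i - s - h := by omega
      nlinarith
    omega

theorem stmt15_general (a b n : ℕ) (hn : n = a + b + 1)
    (I : Composition n) (hW : ∀ i ∈ I.blocks, 2 ≤ i)
    (hle : (I.blocks.headI : ℤ) ≤ (ipPart I.blocks (b + 1) : ℤ) - sVal I.blocks (b + 1)) :
    DI a b I.blocks
        = ((sVal I.blocks (b + 1) : ℝ) - 1)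
          * ((ipPart I.blocks (b + 1) : ℝ) - sVal I.blocks (b + 1) - I.blocks.headI)
          - 2 ∧
    -2 ≤ DI a b I.blocks ∧
    (DI a b I.blocks < 0 →
      sVal I.blocks (b + 1) = 1 ∨ sVal I.blocks (b + 1) = 2 ∨
        sVal I.blocks (b + 1) = ipPart I.blocks (b + 1) - I.blocks.headI) := by
  have hsum : I.blocks.sum = a + b + 1 := I.blocks_sum.trans hn
  have hhead : 2 ≤ I.blocks.headI := by
    cases hB : I.blocks with
    | nil => simp [hB] at hsum
    | cons x R => exact hW x (by simp [hB])
  obtain ⟨-, -, -, -, hs⟩ := exists_eq_append_ipPart_cons (I := I.blocks) (m := b + 1) (by omega)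
    (by omega)
  rw [DI_eq_of_headI_le hsum hhead hle]
  exact ⟨rfl, neg_two_le_and_eq_of_neg hs hle⟩

/-- For `I ∈ W_≤`: `D_I = (s − 1)(i_p − s − i₁) − 2 ≥ −2`, and if `D_I < 0` then
`s ∈ {1, 2, i_p − i₁}`. -/
theorem stmt15 (a b n : ℕ) (h2 : 2 ≤ b) (hba : b ≤ a) (hn : n = a + b + 1)
    (I : Composition n) (hW : ∀ i ∈ I.blocks, 2 ≤ i)
    (hle : (I.blocks.headI : ℤ) ≤ (ipPart I.blocks (b + 1) : ℤ) - sVal I.blocks (b + 1)) :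
    DI a b I.blocks
        = ((sVal I.blocks (b + 1) : ℝ) - 1)
          * ((ipPart I.blocks (b + 1) : ℝ) - sVal I.blocks (b + 1) - I.blocks.headI)
          - 2 ∧
    -2 ≤ DI a b I.blocks ∧
    (DI a b I.blocks < 0 →
      sVal I.blocks (b + 1) = 1 ∨ sVal I.blocks (b + 1) = 2 ∨
        sVal I.blocks (b + 1) = ipPart I.blocks (b + 1) - I.blocks.headI) :=
  stmt15_general a b n hn I hW hle
end
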